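/- arXiv:1709.00830 — 2 statements merged into one kernel-verified Lean document; each statement's English description precedes it below -/
import Mathlib

section
/- Let ρ : ΣB^∞ ⇒ BΣ* be a monotone biGSOS specification, where (B, ⊑) is a DCPO_⊥-ordered functor which preserves weak pullbacks and has a cofree comonad B^∞, and Σ has a free monad Σ*. Let m : Σ*∅ → BΣ*∅ be the least supported model of ρ, let (Z, ζ) be the final B-coalgebra, and let ! : Σ*∅ → Z be the unique B-coalgebra homomorphism from (Σ*∅, m) to (Z, ζ). Then there exists a Σ*-algebra structure β : Σ*Z → Z such that ! is a Σ*-algebra homomorphism from (Σ*∅, μ_∅) to (Z, β); consequently, behavioural equivalence on the least supported model of ρ is a congruence. -/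
/-- A `Set`-endofunctor, presented concretely. -/
structure SetFunctor where
  obj : Type → Type
  map : {X Y : Type} → (X → Y) → obj X → obj Y
  map_id : ∀ {X : Type}, map (id : X → X) = id
  map_comp : ∀ {X Y Z : Type} (f : X → Y) (g : Y → Z), map (g ∘ f) = map g ∘ map f

/-- An ordered functor: a `Set`-functor together with a preorder on each `B X`,
such that `B f` is monotone for every `f`. -/
structure OrderedFunctor extends SetFunctor where
  le : {X : Type} → obj X → obj X → Prop
  le_refl : ∀ {X : Type} (b : obj X), le b b
  le_trans : ∀ {X : Type} {a b c : obj X}, le a b → le b c → le a c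
  map_mono : ∀ {X Y : Type} (f : X → Y) {b c : obj X}, le b c → le (map f b) (map f c)

/-- The canonical relation lifting of a `Set`-functor. -/
def SetFunctor.relLift (B : SetFunctor) {X Y : Type} (R : X → Y → Prop)
    (b : B.obj X) (c : B.obj Y) : Prop :=
  ∃ d : B.obj {p : X × Y // R p.1 p.2},
    B.map (fun p => p.1.1) d = b ∧ B.map (fun p => p.1.2) d = c

/-- The lax relation lifting `⊑ ∘ Rel(B)(R) ∘ ⊑` of an ordered functor. -/
def OrderedFunctor.laxRelLift (B : OrderedFunctor) {X Y : Type} (R : X → Y → Prop)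
    (b : B.obj X) (c : B.obj Y) : Prop :=
  ∃ b' c', B.le b b' ∧ B.toSetFunctor.relLift R b' c' ∧ B.le c' c

/-- `R` is a simulation between coalgebras `f` and `g`. -/
def OrderedFunctor.IsSimulation (B : OrderedFunctor) {X Y : Type}
    (f : X → B.obj X) (g : Y → B.obj Y) (R : X → Y → Prop) : Prop :=
  ∀ x y, R x y → B.laxRelLift R (f x) (g y)

/-- Similarity: the greatest simulation (union of all simulations). -/
def OrderedFunctor.Sim (B : OrderedFunctor) {X Y : Type}
    (f : X → B.obj X) (g : Y → B.obj Y) (x : X) (y : Y) : Prop :=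
  ∃ R, B.IsSimulation f g R ∧ R x y

/-- The ordered functor `B(-) × Z`, with `(b,z) ⊑̃ (c,z') iff b ⊑ c ∧ z = z'`. -/
def OrderedFunctor.prodConst (B : OrderedFunctor) (Z : Type) : OrderedFunctor where
  obj X := B.obj X × Z
  map f p := (B.map f p.1, p.2)
  map_id := by intro X; funext p; simp [SetFunctor.map_id]
  map_comp := by intro X Y Z' f g; funext p; simp [SetFunctor.map_comp]
  le p q := B.le p.1 q.1 ∧ p.2 = q.2
  le_refl := by intro X p; exact ⟨B.le_refl _, rfl⟩
  le_trans := by intro X a b c h1 h2; exact ⟨B.le_trans h1.1 h2.1, h1.2.trans h2.2⟩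
  map_mono := by intro X Y f b c h; exact ⟨B.map_mono f h.1, h.2⟩

/-- `h` is a `B`-coalgebra homomorphism from `(X, f)` to `(Y, g)`. -/
def IsCoalgHom (B : SetFunctor) {X Y : Type} (f : X → B.obj X) (g : Y → B.obj Y)
    (h : X → Y) : Prop :=
  ∀ x, B.map h (f x) = g (h x)

/-- A cofree comonad for `B`: for every `X`, `⟨θ_X, ε_X⟩ : B^∞X → B(B^∞X) × X` is a
final coalgebra for `B(-) × X`; `ext f p` is the unique mediating homomorphism. -/
structure Cofree (B : SetFunctor) where
  obj : Type → Type
  θ : {X : Type} → obj X → B.obj (obj X)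
  ε : {X : Type} → obj X → X
  ext : {X C : Type} → (C → B.obj C) → (C → X) → C → obj X
  θ_ext : ∀ {X C : Type} (f : C → B.obj C) (p : C → X) (c : C),
    θ (ext f p c) = B.map (ext f p) (f c)
  ε_ext : ∀ {X C : Type} (f : C → B.obj C) (p : C → X) (c : C),
    ε (ext f p c) = p c
  ext_unique : ∀ {X C : Type} (f : C → B.obj C) (p : C → X) (h : C → obj X),
    (∀ c, θ (h c) = B.map h (f c)) → (∀ c, ε (h c) = p c) → h = ext f p

/-- The functorial action of the cofree comonad `B^∞`. -/
def Cofree.cmap {B : SetFunctor} (W : Cofree B) {X Y : Type} (h : X → Y) :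
    W.obj X → W.obj Y :=
  W.ext W.θ (h ∘ W.ε)

/-- The coinductive extension `f^∞ : X → B^∞X` of a coalgebra `f : X → BX`. -/
def Cofree.coext {B : SetFunctor} (W : Cofree B) {X : Type} (f : X → B.obj X) :
    X → W.obj X :=
  W.ext f id

/-- The comultiplication `δ : B^∞ ⇒ B^∞B^∞` of the cofree comonad. -/
def Cofree.δ {B : SetFunctor} (W : Cofree B) {X : Type} : W.obj X → W.obj (W.obj X) :=
  W.ext W.θ id

/-- The similarity order `≲_{B^∞X}` on the cofree coalgebra `B^∞X`: similarity of
`⟨θ_X, ε_X⟩` with itself for the ordered functor `B(-) × X`. -/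
def cofreeSim (B : OrderedFunctor) (W : Cofree B.toSetFunctor) (X : Type) :
    W.obj X → W.obj X → Prop :=
  (B.prodConst X).Sim (fun w => (W.θ w, W.ε w)) (fun w => (W.θ w, W.ε w))

/-- A free monad for `Σ`: `[ι_X, η_X] : Σ(Σ*X) + X → Σ*X` is an initial algebra
for `Σ(-) + X`, with `fold` the unique mediating algebra homomorphism, and
(by Lambek's lemma) `[ι_X, η_X]` is an isomorphism with inverse `dest`. -/
structure FreeMonad (S : SetFunctor) where
  obj : Type → Type
  η : {X : Type} → X → obj X
  ι : {X : Type} → S.obj (obj X) → obj X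
  fold : {X A : Type} → (S.obj A → A) → (X → A) → obj X → A
  fold_ι : ∀ {X A : Type} (a : S.obj A → A) (h : X → A) (t : S.obj (obj X)),
    fold a h (ι t) = a (S.map (fold a h) t)
  fold_η : ∀ {X A : Type} (a : S.obj A → A) (h : X → A) (x : X),
    fold a h (η x) = h x
  fold_unique : ∀ {X A : Type} (a : S.obj A → A) (h : X → A) (k : obj X → A),
    (∀ t, k (ι t) = a (S.map k t)) → (∀ x, k (η x) = h x) → k = fold a h
  dest : {X : Type} → obj X → S.obj (obj X) ⊕ X
  dest_ι : ∀ {X : Type} (t : S.obj (obj X)), dest (ι t) = Sum.inl t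
  dest_η : ∀ {X : Type} (x : X), dest (η x) = Sum.inr x
  elim_dest : ∀ {X : Type} (t : obj X), Sum.elim ι η (dest t) = t

/-- The functorial action of the free monad `Σ*`. -/
def FreeMonad.mmap {S : SetFunctor} (M : FreeMonad S) {X Y : Type} (h : X → Y) :
    M.obj X → M.obj Y :=
  M.fold M.ι (M.η ∘ h)

/-- The multiplication `μ : Σ*Σ* ⇒ Σ*` of the free monad. -/
def FreeMonad.μ {S : SetFunctor} (M : FreeMonad S) {X : Type} :
    M.obj (M.obj X) → M.obj X :=
  M.fold M.ι id

/-- A biGSOS specification: a natural transformation `ρ : ΣB^∞ ⇒ BΣ*`. -/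
structure BiGSOS (S : SetFunctor) (B : OrderedFunctor) (W : Cofree B.toSetFunctor)
    (M : FreeMonad S) where
  app : {X : Type} → S.obj (W.obj X) → B.obj (M.obj X)
  naturality : ∀ {X Y : Type} (h : X → Y) (u : S.obj (W.obj X)),
    app (S.map (W.cmap h) u) = B.map (M.mmap h) (app u)

/-- Monotonicity of a biGSOS specification. -/
def BiGSOS.Monotone {S : SetFunctor} {B : OrderedFunctor} {W : Cofree B.toSetFunctor}
    {M : FreeMonad S} (ρ : BiGSOS S B W M) : Prop :=
  ∀ (X : Type) (u v : S.obj (W.obj X)),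
    S.relLift (cofreeSim B W X) u v → B.le (ρ.app u) (ρ.app v)

/-- The map `φ(f) = Bμ_∅ ∘ ρ_{Σ*∅} ∘ Σ(f^∞) ∘ ι_∅⁻¹` on coalgebras `Σ*∅ → BΣ*∅`. -/
def phi0 {S : SetFunctor} {B : OrderedFunctor} {W : Cofree B.toSetFunctor}
    {M : FreeMonad S} (ρ : BiGSOS S B W M)
    (f : M.obj Empty → B.obj (M.obj Empty)) : M.obj Empty → B.obj (M.obj Empty) :=
  fun t => Sum.elim (fun s => B.map M.μ (ρ.app (S.map (W.coext f) s)))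
    (fun x => x.elim) (M.dest t)

/-- The map `φ_c(f) = [Bμ_X ∘ ρ_{Σ*X} ∘ Σ(f^∞), Bη_X ∘ c] ∘ [ι_X, η_X]⁻¹` on
coalgebras `Σ*X → BΣ*X`, for a coalgebra `c : X → BX`. -/
def phiC {S : SetFunctor} {B : OrderedFunctor} {W : Cofree B.toSetFunctor}
    {M : FreeMonad S} (ρ : BiGSOS S B W M) {X : Type} (c : X → B.obj X)
    (f : M.obj X → B.obj (M.obj X)) : M.obj X → B.obj (M.obj X) :=
  fun t => Sum.elim (fun s => B.map M.μ (ρ.app (S.map (W.coext f) s)))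
    (fun x => B.map M.η (c x)) (M.dest t)

/-- A supported model of a biGSOS specification `ρ`. -/
def IsSupportedModel {S : SetFunctor} {B : OrderedFunctor} {W : Cofree B.toSetFunctor}
    {M : FreeMonad S} (ρ : BiGSOS S B W M)
    (f : M.obj Empty → B.obj (M.obj Empty)) : Prop :=
  ∀ t : S.obj (M.obj Empty), f (M.ι t) = B.map M.μ (ρ.app (S.map (W.coext f) t))

/-- The least supported model of `ρ` (least w.r.t. the pointwise order). -/
def IsLeastSupportedModel {S : SetFunctor} {B : OrderedFunctor} {W : Cofree B.toSetFunctor}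
    {M : FreeMonad S} (ρ : BiGSOS S B W M)
    (m : M.obj Empty → B.obj (M.obj Empty)) : Prop :=
  IsSupportedModel ρ m ∧ ∀ f, IsSupportedModel ρ f → ∀ t, B.le (m t) (f t)

/-- `u` is a least upper bound of `D` with respect to the relation `le`. -/
def IsLubRel {α : Type} (le : α → α → Prop) (D : Set α) (u : α) : Prop :=
  (∀ a ∈ D, le a u) ∧ ∀ v, (∀ a ∈ D, le a v) → le u v

/-- `le` makes `α` into a pointed DCPO: a partial order with a least element in
which every nonempty directed subset has a least upper bound. -/
def IsPointedDCPO {α : Type} (le : α → α → Prop) : Prop :=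
  (∀ a b : α, le a b → le b a → a = b) ∧
  (∃ bot : α, ∀ a, le bot a) ∧
  ∀ D : Set α, D.Nonempty → DirectedOn le D → ∃ u, IsLubRel le D u

/-- A `DCPO_⊥`-ordered functor: each `BX` is a pointed DCPO and each `Bf` is continuous. -/
structure DCPOOrderedFunctor extends OrderedFunctor where
  dcpo : ∀ X : Type, IsPointedDCPO (fun a b : obj X => le a b)
  map_cont : ∀ {X Y : Type} (f : X → Y) (D : Set (obj X)) (u : obj X),
    D.Nonempty → DirectedOn (fun a b => le a b) D →
    IsLubRel (fun a b => le a b) D u →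
    IsLubRel (fun a b => le a b) (map f '' D) (map f u)

/-- Preservation of weak pullbacks by a `Set`-functor. -/
def SetFunctor.PreservesWeakPullbacks (B : SetFunctor) : Prop :=
  ∀ {X Y Z : Type} (f : X → Z) (g : Y → Z) (u : B.obj X) (v : B.obj Y),
    B.map f u = B.map g v →
    ∃ d : B.obj {p : X × Y // f p.1 = g p.2},
      B.map (fun p => p.1.1) d = u ∧ B.map (fun p => p.1.2) d = v

/-- `m` is the least fixed point of `φ` on coalgebras with carrier `C`. -/
def IsLfpCoalg (B : OrderedFunctor) {C : Type}
    (φ : (C → B.obj C) → (C → B.obj C)) (m : C → B.obj C) : Prop :=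
  φ m = m ∧ ∀ f, φ f = f → ∀ t, B.le (m t) (f t)

/-- A distributive law `λ : Σ*B^∞ ⇒ B^∞Σ*` of the free monad `Σ*` over the cofree
comonad `B^∞`. -/
structure DistLaw (S B : SetFunctor) (W : Cofree B) (M : FreeMonad S) where
  app : {X : Type} → M.obj (W.obj X) → W.obj (M.obj X)
  naturality : ∀ {X Y : Type} (h : X → Y) (t : M.obj (W.obj X)),
    app (M.mmap (W.cmap h) t) = W.cmap (M.mmap h) (app t)
  unit : ∀ {X : Type} (w : W.obj X), app (M.η w) = W.cmap M.η w
  counit : ∀ {X : Type} (t : M.obj (W.obj X)), W.ε (app t) = M.mmap W.ε t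
  mult : ∀ {X : Type} (t : M.obj (M.obj (W.obj X))),
    app (M.μ t) = W.cmap M.μ (app (M.mmap app t))
  comult : ∀ {X : Type} (t : M.obj (W.obj X)),
    W.δ (app t) = W.cmap app (app (M.mmap W.δ t))

namespace S11

/-- A set is admissible for `Φ`: contains `bot`, closed under `Φ` and directed lubs. -/
def Adm {γ : Type} (le : γ → γ → Prop) (Φ : γ → γ) (bot : γ) (St : Set γ) : Prop :=
  bot ∈ St ∧ (∀ x ∈ St, Φ x ∈ St) ∧
  ∀ E : Set γ, E ⊆ St → E.Nonempty → DirectedOn le E → ∀ u, IsLubRel le E u → u ∈ St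

/-- Pataraia's fixed point theorem, with a least fixed point and an induction principle. -/
theorem pataraia {γ : Type} (le : γ → γ → Prop)
    (hrefl : ∀ a, le a a) (htrans : ∀ {a b c : γ}, le a b → le b c → le a c)
    (bot : γ) (hbot : ∀ a, le bot a)
    (hlub : ∀ E : Set γ, E.Nonempty → DirectedOn le E → ∃ u, IsLubRel le E u)
    (hanti : ∀ a b : γ, le a b → le b a → a = b)
    (Φ : γ → γ) (hΦ : ∀ {a b}, le a b → le (Φ a) (Φ b)) :
    ∃ a, Φ a = a ∧ (∀ b, Φ b = b → le a b) ∧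
      ∀ St : Set γ, Adm le Φ bot St → a ∈ St := by
  classical
  set A : Set γ := {x | ∀ St : Set γ, Adm le Φ bot St → x ∈ St} with hA
  have hAdmA : Adm le Φ bot A := by
    refine ⟨fun St hSt => hSt.1, fun x hx St hSt => hSt.2.1 x (hx St hSt), ?_⟩
    intro E hE hne hdir u hu St hSt
    exact hSt.2.2 E (fun x hx => hE hx St hSt) hne hdir u hu
  -- A ⊆ {x | le x (Φ x)}
  have hD0 : ∀ x ∈ A, le x (Φ x) := by
    intro x hx
    refine hx {x | le x (Φ x)} ⟨hbot _, fun y hy => hΦ hy, ?_⟩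
    intro E hE hne hdir u hu
    exact hu.2 (Φ u) (fun a ha => htrans (hE ha) (hΦ (hu.1 a ha)))
  -- the set of monotone inflationary endomaps of A
  set SubT := {x : γ // x ∈ A} with hSubT
  set Efun : Set (SubT → SubT) :=
    {h | (∀ p q : SubT, le p.1 q.1 → le (h p).1 (h q).1) ∧ ∀ p : SubT, le p.1 (h p).1}
    with hEfun
  have hid : (id : SubT → SubT) ∈ Efun := ⟨fun p q h => h, fun p => hrefl _⟩
  have hEx : ∀ x : SubT, ((fun h : SubT → SubT => (h x).1) '' Efun).Nonempty ∧
      DirectedOn le ((fun h : SubT → SubT => (h x).1) '' Efun) := by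
    intro x
    constructor
    · exact ⟨x.1, id, hid, rfl⟩
    · rintro _ ⟨h1, hh1, rfl⟩ _ ⟨h2, hh2, rfl⟩
      refine ⟨((fun p => h1 (h2 p)) x).1, ⟨fun p => h1 (h2 p),
        ⟨fun p q hpq => hh1.1 _ _ (hh2.1 _ _ hpq), fun p => htrans (hh2.2 p) (hh1.2 _)⟩, rfl⟩,
        ?_, ?_⟩
      · exact hh1.1 _ _ (hh2.2 x)
      · exact hh1.2 (h2 x)
  have hExlub : ∀ x : SubT, ∃ u, IsLubRel le ((fun h : SubT → SubT => (h x).1) '' Efun) u :=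
    fun x => hlub _ (hEx x).1 (hEx x).2
  set hstar0 : SubT → γ := fun x => (hExlub x).choose with hstar0def
  have hstarlub : ∀ x : SubT, IsLubRel le ((fun h : SubT → SubT => (h x).1) '' Efun)
      (hstar0 x) := fun x => (hExlub x).choose_spec
  have hstarA : ∀ x : SubT, hstar0 x ∈ A := by
    intro x
    exact hAdmA.2.2 _ (by rintro _ ⟨h, hh, rfl⟩; exact (h x).2) (hEx x).1 (hEx x).2 _
      (hstarlub x)
  set hstar : SubT → SubT := fun x => ⟨hstar0 x, hstarA x⟩ with hstardef
  have hstarE : hstar ∈ Efun := by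
    constructor
    · intro p q hpq
      refine (hstarlub p).2 _ ?_
      rintro _ ⟨h, hh, rfl⟩
      exact htrans (hh.1 _ _ hpq) ((hstarlub q).1 _ ⟨h, hh, rfl⟩)
    · intro p
      exact (hstarlub p).1 _ ⟨id, hid, rfl⟩
  set ΦS : SubT → SubT := fun x => ⟨Φ x.1, hAdmA.2.1 _ x.2⟩ with hΦS
  have hcompE : (fun x => ΦS (hstar x)) ∈ Efun := by
    constructor
    · intro p q hpq; exact hΦ (hstarE.1 _ _ hpq)
    · intro p; exact htrans (hstarE.2 p) (hD0 _ (hstar p).2)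
  have hfixall : ∀ x : SubT, Φ (hstar0 x) = hstar0 x := by
    intro x
    refine hanti _ _ ?_ ?_
    · exact (hstarlub x).1 _ ⟨fun y => ΦS (hstar y), hcompE, rfl⟩
    · exact hD0 _ (hstarA x)
  have hbotA : bot ∈ A := hAdmA.1
  refine ⟨hstar0 ⟨bot, hbotA⟩, hfixall _, ?_, ?_⟩
  · intro b hb
    have : hstar0 ⟨bot, hbotA⟩ ∈ {x | le x b} := by
      refine hstarA ⟨bot, hbotA⟩ {x | le x b} ⟨hbot _, ?_, ?_⟩
      · intro y hy
        have := hΦ hy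
        rwa [hb] at this
      · intro E hE hne hdir u hu
        exact hu.2 b (fun a ha => hE ha)
    exact this
  · intro St hSt
    exact hstarA ⟨bot, hbotA⟩ St hSt

/-- Least upper bounds are unique. -/
theorem isLubRel_unique {γ : Type} (le : γ → γ → Prop)
    (hanti : ∀ a b : γ, le a b → le b a → a = b)
    {E : Set γ} {u v : γ} (hu : IsLubRel le E u) (hv : IsLubRel le E v) : u = v :=
  hanti _ _ (hu.2 v hv.1) (hv.2 u hu.1)

end S11
namespace S11


theorem map_map (S : SetFunctor) {X Y Z : Type} (f : X → Y) (g : Y → Z) (x : S.obj X) :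
    S.map g (S.map f x) = S.map (fun a => g (f a)) x :=
  (congrFun (S.map_comp f g) x).symm

section MonadLemmas
variable {S : SetFunctor} {M : FreeMonad S}

theorem mu_iota {X : Type} (s : S.obj (M.obj (M.obj X))) :
    M.μ (M.ι s) = M.ι (S.map M.μ s) := M.fold_ι _ _ s

theorem mu_eta {X : Type} (t : M.obj X) : M.μ (M.η t) = t := M.fold_η _ _ t

theorem mmap_iota {X Y : Type} (h : X → Y) (s : S.obj (M.obj X)) :
    M.mmap h (M.ι s) = M.ι (S.map (M.mmap h) s) := M.fold_ι _ _ s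

theorem mmap_eta {X Y : Type} (h : X → Y) (x : X) :
    M.mmap h (M.η x) = M.η (h x) := M.fold_η _ _ x

theorem mu_mu {X : Type} :
    (fun v : M.obj (M.obj (M.obj X)) => M.μ (M.μ v)) = fun v => M.μ (M.mmap M.μ v) := by
  have h1 : (fun v : M.obj (M.obj (M.obj X)) => M.μ (M.μ v)) = M.fold M.ι M.μ := by
    refine M.fold_unique _ _ _ ?_ ?_
    · intro t
      show M.μ (M.μ (M.ι t)) = M.ι (S.map (fun v => M.μ (M.μ v)) t)
      rw [mu_iota, mu_iota, map_map]
    · intro x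
      show M.μ (M.μ (M.η x)) = M.μ x
      rw [mu_eta]
  have h2 : (fun v : M.obj (M.obj (M.obj X)) => M.μ (M.mmap M.μ v)) = M.fold M.ι M.μ := by
    refine M.fold_unique _ _ _ ?_ ?_
    · intro t
      show M.μ (M.mmap M.μ (M.ι t)) = M.ι (S.map (fun v => M.μ (M.mmap M.μ v)) t)
      rw [mmap_iota, mu_iota, map_map]
    · intro x
      show M.μ (M.mmap M.μ (M.η x)) = M.μ x
      rw [mmap_eta, mu_eta]
  rw [h1, h2]

theorem mmap_mu {X Y : Type} (h : X → Y) :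
    (fun v : M.obj (M.obj X) => M.mmap h (M.μ v)) = fun v => M.μ (M.mmap (M.mmap h) v) := by
  have h1 : (fun v : M.obj (M.obj X) => M.mmap h (M.μ v)) = M.fold M.ι (M.mmap h) := by
    refine M.fold_unique _ _ _ ?_ ?_
    · intro t
      show M.mmap h (M.μ (M.ι t)) = M.ι (S.map (fun v => M.mmap h (M.μ v)) t)
      rw [mu_iota, mmap_iota, map_map]
    · intro x
      show M.mmap h (M.μ (M.η x)) = M.mmap h x
      rw [mu_eta]
  have h2 : (fun v : M.obj (M.obj X) => M.μ (M.mmap (M.mmap h) v)) = M.fold M.ι (M.mmap h) := by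
    refine M.fold_unique _ _ _ ?_ ?_
    · intro t
      show M.μ (M.mmap (M.mmap h) (M.ι t)) = M.ι (S.map (fun v => M.μ (M.mmap (M.mmap h) v)) t)
      rw [mmap_iota, mu_iota, map_map]
    · intro x
      show M.μ (M.mmap (M.mmap h) (M.η x)) = M.mmap h x
      rw [mmap_eta, mu_eta]
  rw [h1, h2]

theorem mu_comp_eta {X : Type} :
    (fun t : M.obj X => M.μ (M.η t)) = id := by
  funext t; exact mu_eta t

theorem eq_iota_of_dest {X : Type} {t : M.obj X} {s : S.obj (M.obj X)}
    (h : M.dest t = Sum.inl s) : t = M.ι s := by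
  have h2 := M.elim_dest t
  rw [h] at h2
  exact h2.symm

theorem eq_eta_of_dest {X : Type} {t : M.obj X} {x : X}
    (h : M.dest t = Sum.inr x) : t = M.η x := by
  have h2 := M.elim_dest t
  rw [h] at h2
  exact h2.symm

end MonadLemmas

section CofreeLemmas
variable {B' : SetFunctor} {W : Cofree B'}

theorem theta_coext {T : Type} (f : T → B'.obj T) (t : T) :
    W.θ (W.coext f t) = B'.map (W.coext f) (f t) := W.θ_ext f id t

theorem eps_coext {T : Type} (f : T → B'.obj T) (t : T) :
    W.ε (W.coext f t) = t := W.ε_ext f id t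

theorem theta_cmap {X Y : Type} (h : X → Y) (w : W.obj X) :
    W.θ (W.cmap h w) = B'.map (W.cmap h) (W.θ w) := W.θ_ext _ _ w

theorem eps_cmap {X Y : Type} (h : X → Y) (w : W.obj X) :
    W.ε (W.cmap h w) = h (W.ε w) := W.ε_ext _ _ w

theorem cmap_id {X : Type} : (W.cmap (id : X → X)) = id := by
  have h1 : (id : W.obj X → W.obj X) = W.ext W.θ (id ∘ W.ε) := by
    refine W.ext_unique _ _ _ ?_ ?_
    · intro c
      show W.θ c = B'.map id (W.θ c)
      rw [B'.map_id]
      rfl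
    · intro c; rfl
  exact h1.symm

/-- If `φ` is a coalgebra homomorphism from `f` to `g`, then the coinductive
extensions commute: `cmap φ ∘ coext f = coext g ∘ φ`. -/
theorem hom_coext {T U : Type} (f : T → B'.obj T) (g : U → B'.obj U) (φ : T → U)
    (hφ : ∀ t, B'.map φ (f t) = g (φ t)) :
    (fun t => W.cmap φ (W.coext f t)) = fun t => W.coext g (φ t) := by
  have e1 : (fun t => W.cmap φ (W.coext f t)) = W.ext f φ := by
    refine W.ext_unique f φ _ ?_ ?_
    · intro c
      show W.θ (W.cmap φ (W.coext f c)) = B'.map (fun t => W.cmap φ (W.coext f t)) (f c)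
      rw [theta_cmap, theta_coext, map_map]
    · intro c
      show W.ε (W.cmap φ (W.coext f c)) = φ c
      rw [eps_cmap, eps_coext]
  have e2 : (fun t => W.coext g (φ t)) = W.ext f φ := by
    refine W.ext_unique f φ _ ?_ ?_
    · intro c
      show W.θ (W.coext g (φ c)) = B'.map (fun t => W.coext g (φ t)) (f c)
      rw [theta_coext, ← hφ, map_map]
    · intro c
      show W.ε (W.coext g (φ c)) = φ c
      rw [eps_coext]
  rw [e1, e2]

end CofreeLemmas

theorem relLift_map (S : SetFunctor) {X Y₁ Y₂ : Type} (R : Y₁ → Y₂ → Prop)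
    (p : X → Y₁) (q : X → Y₂) (h : ∀ x, R (p x) (q x)) (s : S.obj X) :
    S.relLift R (S.map p s) (S.map q s) := by
  refine ⟨S.map (fun x => ⟨(p x, q x), h x⟩) s, ?_, ?_⟩
  · rw [map_map]
  · rw [map_map]

end S11
namespace S11

section SimLemmas
variable (B : OrderedFunctor) (W : Cofree B.toSetFunctor)

theorem sim_le {T U : Type} (f : T → B.obj T) (g : U → B.obj U) (φ : T → U)
    (hφ : ∀ t, B.le (B.map φ (f t)) (g (φ t))) (t₀ : T) :
    cofreeSim B W U (W.cmap φ (W.coext f t₀)) (W.coext g (φ t₀)) := by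
  refine ⟨fun w₁ w₂ => ∃ t, w₁ = W.cmap φ (W.coext f t) ∧ w₂ = W.coext g (φ t),
    ?_, ⟨t₀, rfl, rfl⟩⟩
  rintro w₁ w₂ ⟨t, rfl, rfl⟩
  refine ⟨(B.map (fun x => W.cmap φ (W.coext f x)) (f t), φ t),
          (B.map (fun x => W.coext g (φ x)) (f t), φ t), ⟨?_, ?_⟩,
          ⟨(B.map (fun x : T =>
              (⟨(W.cmap φ (W.coext f x), W.coext g (φ x)), ⟨x, rfl, rfl⟩⟩ :
                {p : W.obj U × W.obj U //
                  ∃ t', p.1 = W.cmap φ (W.coext f t') ∧ p.2 = W.coext g (φ t')})) (f t),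
            φ t), ?_, ?_⟩, ⟨?_, ?_⟩⟩
  · show B.le (W.θ (W.cmap φ (W.coext f t))) _
    rw [theta_cmap, theta_coext, map_map]
    exact B.le_refl _
  · show W.ε (W.cmap φ (W.coext f t)) = φ t
    rw [eps_cmap, eps_coext]
  · show (B.map _ (B.map _ (f t)), φ t) = (B.map (fun x => W.cmap φ (W.coext f x)) (f t), φ t)
    rw [map_map]
  · show (B.map _ (B.map _ (f t)), φ t) = (B.map (fun x => W.coext g (φ x)) (f t), φ t)
    rw [map_map]
  · show B.le (B.map (fun x => W.coext g (φ x)) (f t)) (W.θ (W.coext g (φ t)))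
    rw [theta_coext]
    have e : B.map (fun x => W.coext g (φ x)) (f t)
        = B.map (W.coext g) (B.map φ (f t)) :=
      (map_map B.toSetFunctor φ (W.coext g) (f t)).symm
    rw [e]
    exact B.map_mono _ (hφ t)
  · show φ t = W.ε (W.coext g (φ t))
    rw [eps_coext]

theorem sim_ge {T U : Type} (f : T → B.obj T) (g : U → B.obj U) (φ : T → U)
    (hφ : ∀ t, B.le (g (φ t)) (B.map φ (f t))) (t₀ : T) :
    cofreeSim B W U (W.coext g (φ t₀)) (W.cmap φ (W.coext f t₀)) := by
  refine ⟨fun w₁ w₂ => ∃ t, w₁ = W.coext g (φ t) ∧ w₂ = W.cmap φ (W.coext f t),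
    ?_, ⟨t₀, rfl, rfl⟩⟩
  rintro w₁ w₂ ⟨t, rfl, rfl⟩
  refine ⟨(B.map (fun x => W.coext g (φ x)) (f t), φ t),
          (B.map (fun x => W.cmap φ (W.coext f x)) (f t), φ t), ⟨?_, ?_⟩,
          ⟨(B.map (fun x : T =>
              (⟨(W.coext g (φ x), W.cmap φ (W.coext f x)), ⟨x, rfl, rfl⟩⟩ :
                {p : W.obj U × W.obj U //
                  ∃ t', p.1 = W.coext g (φ t') ∧ p.2 = W.cmap φ (W.coext f t')})) (f t),
            φ t), ?_, ?_⟩, ⟨?_, ?_⟩⟩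
  · show B.le (W.θ (W.coext g (φ t))) (B.map (fun x => W.coext g (φ x)) (f t))
    rw [theta_coext]
    have e : B.map (fun x => W.coext g (φ x)) (f t)
        = B.map (W.coext g) (B.map φ (f t)) :=
      (map_map B.toSetFunctor φ (W.coext g) (f t)).symm
    rw [e]
    exact B.map_mono _ (hφ t)
  · show W.ε (W.coext g (φ t)) = φ t
    rw [eps_coext]
  · show (B.map _ (B.map _ (f t)), φ t) = (B.map (fun x => W.coext g (φ x)) (f t), φ t)
    rw [map_map]
  · show (B.map _ (B.map _ (f t)), φ t) = (B.map (fun x => W.cmap φ (W.coext f x)) (f t), φ t)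
    rw [map_map]
  · show B.le (B.map (fun x => W.cmap φ (W.coext f x)) (f t)) (W.θ (W.cmap φ (W.coext f t)))
    rw [theta_cmap, theta_coext, map_map]
    exact B.le_refl _
  · show φ t = W.ε (W.cmap φ (W.coext f t))
    rw [eps_cmap, eps_coext]

theorem sim_mono {T : Type} (f g : T → B.obj T) (h : ∀ t, B.le (f t) (g t)) (t₀ : T) :
    cofreeSim B W T (W.coext f t₀) (W.coext g t₀) := by
  have h2 := sim_le B W f g id (fun t => by rw [B.map_id]; exact h t) t₀
  rwa [cmap_id] at h2

end SimLemmas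

end S11
namespace S11

section Steps
variable {S : SetFunctor} {B : DCPOOrderedFunctor}
variable {W : Cofree B.toOrderedFunctor.toSetFunctor} {M : FreeMonad S}
variable (ρ : BiGSOS S B.toOrderedFunctor W M)

theorem phiC_unfold_inl {X : Type} (c : X → B.obj X)
    (f : M.obj X → B.obj (M.obj X)) {t : M.obj X} {s : S.obj (M.obj X)}
    (hd : M.dest t = Sum.inl s) :
    phiC ρ c f t = B.map M.μ (ρ.app (S.map (W.coext f) s)) := by
  unfold phiC; rw [hd]; rfl

theorem phiC_unfold_inr {X : Type} (c : X → B.obj X)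
    (f : M.obj X → B.obj (M.obj X)) {t : M.obj X} {x : X}
    (hd : M.dest t = Sum.inr x) :
    phiC ρ c f t = B.map M.η (c x) := by
  unfold phiC; rw [hd]; rfl

theorem phiC_mono (hmono : ρ.Monotone) {X : Type} (c : X → B.obj X)
    (f g : M.obj X → B.obj (M.obj X)) (hfg : ∀ t, B.le (f t) (g t)) (t : M.obj X) :
    B.le (phiC ρ c f t) (phiC ρ c g t) := by
  rcases hd : M.dest t with s | x
  · rw [phiC_unfold_inl ρ c f hd, phiC_unfold_inl ρ c g hd]
    exact B.map_mono _ (hmono _ _ _ (relLift_map S _ _ _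
      (fun u => sim_mono B.toOrderedFunctor W f g hfg u) s))
  · rw [phiC_unfold_inr ρ c f hd, phiC_unfold_inr ρ c g hd]
    exact B.le_refl _

variable {Z : Type} (m : M.obj Empty → B.obj (M.obj Empty)) (ζ : Z → B.obj Z)
variable (bang : M.obj Empty → Z)

/-- Key closure property: if `mmap bang` is a coalgebra homomorphism from `f` to `g`,
it is also one from `phiC ρ m f` to `phiC ρ ζ g`. -/
theorem Cclos (hbang : IsCoalgHom B.toOrderedFunctor.toSetFunctor m ζ bang)
    (f : M.obj (M.obj Empty) → B.obj (M.obj (M.obj Empty)))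
    (g : M.obj Z → B.obj (M.obj Z))
    (hC : ∀ t, B.map (M.mmap bang) (f t) = g (M.mmap bang t)) :
    ∀ t, B.map (M.mmap bang) (phiC ρ m f t) = phiC ρ ζ g (M.mmap bang t) := by
  intro t
  rcases hd : M.dest t with s | x
  · have ht : t = M.ι s := eq_iota_of_dest hd
    have e2 : M.mmap bang t = M.ι (S.map (M.mmap bang) s) := by rw [ht, mmap_iota]
    have e3 : phiC ρ ζ g (M.mmap bang t)
        = B.map M.μ (ρ.app (S.map (W.coext g) (S.map (M.mmap bang) s))) := by
      unfold phiC; rw [e2, M.dest_ι]; rfl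
    rw [phiC_unfold_inl ρ m f hd, e3]
    rw [map_map, mmap_mu bang]
    have e4 : B.map (fun v => M.μ (M.mmap (M.mmap bang) v)) (ρ.app (S.map (W.coext f) s))
        = B.map M.μ (B.map (M.mmap (M.mmap bang)) (ρ.app (S.map (W.coext f) s))) :=
      (map_map B.toOrderedFunctor.toSetFunctor _ _ _).symm
    rw [e4, ← ρ.naturality (M.mmap bang), map_map,
      hom_coext f g (M.mmap bang) hC, map_map]
  · have ht : t = M.η x := eq_eta_of_dest hd
    have e2 : M.mmap bang t = M.η (bang x) := by rw [ht, mmap_eta]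
    have e3 : phiC ρ ζ g (M.mmap bang t) = B.map M.η (ζ (bang x)) := by
      unfold phiC; rw [e2, M.dest_η]; rfl
    rw [phiC_unfold_inr ρ m f hd, e3, map_map]
    have e4 : (fun a : M.obj Empty => M.mmap bang (M.η a))
        = fun a : M.obj Empty => M.η (bang a) := by
      funext a; exact mmap_eta bang a
    rw [e4]
    have e5 : B.map (fun a : M.obj Empty => M.η (bang a)) (m x)
        = B.map M.η (B.map bang (m x)) :=
      (map_map B.toOrderedFunctor.toSetFunctor bang M.η (m x)).symm
    rw [e5, hbang x]

/-- Step for direction 1 : `B.map μ ∘ f ⊑ m ∘ μ` is preserved by `phiC ρ m`. -/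
theorem dir1_step (hmono : ρ.Monotone) (hm1 : IsSupportedModel ρ m)
    (f : M.obj (M.obj Empty) → B.obj (M.obj (M.obj Empty)))
    (IH : ∀ u, B.le (B.map M.μ (f u)) (m (M.μ u))) :
    ∀ u, B.le (B.map M.μ (phiC ρ m f u)) (m (M.μ u)) := by
  intro u
  rcases hd : M.dest u with s | x
  · have ht : u = M.ι s := eq_iota_of_dest hd
    have eμ : M.μ u = M.ι (S.map M.μ s) := by rw [ht, mu_iota]
    have eR : m (M.μ u) = B.map M.μ (ρ.app (S.map (fun x => W.coext m (M.μ x)) s)) := by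
      rw [eμ, hm1 (S.map M.μ s), map_map]
    have eL : B.map M.μ (phiC ρ m f u)
        = B.map M.μ (ρ.app (S.map (fun x => W.cmap M.μ (W.coext f x)) s)) := by
      rw [phiC_unfold_inl ρ m f hd, map_map, mu_mu]
      have e4 : B.map (fun v => M.μ (M.mmap M.μ v)) (ρ.app (S.map (W.coext f) s))
          = B.map M.μ (B.map (M.mmap M.μ) (ρ.app (S.map (W.coext f) s))) :=
        (map_map B.toOrderedFunctor.toSetFunctor _ _ _).symm
      rw [e4, ← ρ.naturality M.μ, map_map]
    rw [eL, eR]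
    exact B.map_mono _ (hmono _ _ _ (relLift_map S _ _ _
      (fun x => sim_le B.toOrderedFunctor W f m M.μ IH x) s))
  · have ht : u = M.η x := eq_eta_of_dest hd
    have eμ : M.μ u = x := by rw [ht, mu_eta]
    have eL : B.map M.μ (phiC ρ m f u) = m x := by
      rw [phiC_unfold_inr ρ m f hd, map_map, mu_comp_eta, B.map_id]; rfl
    rw [eL, eμ]
    exact B.le_refl _

/-- Step for direction 2. -/
theorem dir2_step (hmono : ρ.Monotone) (hm1 : IsSupportedModel ρ m)
    (hmfix : phiC ρ (fun x : Empty => x.elim) m = m)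
    (ee : M.obj (M.obj Empty) → B.obj (M.obj (M.obj Empty)))
    (hfix : phiC ρ m ee = ee)
    (f' : M.obj Empty → B.obj (M.obj Empty))
    (IH1 : ∀ u, B.le (f' (M.μ u)) (B.map M.μ (ee u)))
    (IH2 : ∀ x, B.le (f' x) (m x)) :
    (∀ u, B.le ((phiC ρ (fun x : Empty => x.elim) f') (M.μ u)) (B.map M.μ (ee u))) ∧
    (∀ x, B.le ((phiC ρ (fun x : Empty => x.elim) f') x) (m x)) := by
  have part2 : ∀ x, B.le ((phiC ρ (fun x : Empty => x.elim) f') x) (m x) := by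
    intro x
    have := phiC_mono ρ hmono (fun x : Empty => x.elim) f' m IH2 x
    rwa [hmfix] at this
  refine ⟨?_, part2⟩
  intro u
  rcases hd : M.dest u with s | x
  · have ht : u = M.ι s := eq_iota_of_dest hd
    have eμ : M.μ u = M.ι (S.map M.μ s) := by rw [ht, mu_iota]
    have hd2 : M.dest (M.μ u) = Sum.inl (S.map M.μ s) := by rw [eμ, M.dest_ι]
    have eL : phiC ρ (fun x : Empty => x.elim) f' (M.μ u)
        = B.map M.μ (ρ.app (S.map (fun x => W.coext f' (M.μ x)) s)) := by
      rw [phiC_unfold_inl ρ (fun x : Empty => x.elim) f' hd2, map_map]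
    have he2 : ee u = B.map M.μ (ρ.app (S.map (W.coext ee) s)) := by
      conv_lhs => rw [← hfix]
      rw [phiC_unfold_inl ρ m ee hd]
    have eR : B.map M.μ (ee u)
        = B.map M.μ (ρ.app (S.map (fun x => W.cmap M.μ (W.coext ee x)) s)) := by
      rw [he2, map_map, mu_mu]
      have e4 : B.map (fun v => M.μ (M.mmap M.μ v)) (ρ.app (S.map (W.coext ee) s))
          = B.map M.μ (B.map (M.mmap M.μ) (ρ.app (S.map (W.coext ee) s))) :=
        (map_map B.toOrderedFunctor.toSetFunctor _ _ _).symm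
      rw [e4, ← ρ.naturality M.μ, map_map]
    rw [eL, eR]
    exact B.map_mono _ (hmono _ _ _ (relLift_map S _ _ _
      (fun x => sim_ge B.toOrderedFunctor W ee f' M.μ IH1 x) s))
  · have ht : u = M.η x := eq_eta_of_dest hd
    have eμ : M.μ u = x := by rw [ht, mu_eta]
    have hdη : M.dest (M.η x) = Sum.inr x := M.dest_η x
    have hee : ee u = B.map M.η (m x) := by
      rw [← hfix, ht, phiC_unfold_inr ρ m ee hdη]
    have eR : B.map M.μ (ee u) = m x := by
      rw [hee, map_map, mu_comp_eta, B.map_id]; rfl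
    rw [eμ, eR]
    exact part2 x

end Steps

end S11
namespace S11

section Dcpo
variable (B : DCPOOrderedFunctor)

noncomputable def botB (X : Type) : B.obj X := (B.dcpo X).2.1.choose

theorem botB_le {X : Type} (a : B.obj X) : B.le (botB B X) a :=
  (B.dcpo X).2.1.choose_spec a

theorem le_antiB {X : Type} {a b : B.obj X} (h1 : B.le a b) (h2 : B.le b a) : a = b :=
  (B.dcpo X).1 a b h1 h2

noncomputable def lubB {X : Type} (E : Set (B.obj X)) (h1 : E.Nonempty)
    (h2 : DirectedOn (fun a b => B.le a b) E) : B.obj X :=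
  ((B.dcpo X).2.2 E h1 h2).choose

theorem lubB_spec {X : Type} (E : Set (B.obj X)) (h1 : E.Nonempty)
    (h2 : DirectedOn (fun a b => B.le a b) E) :
    IsLubRel (fun a b => B.le a b) E (lubB B E h1 h2) :=
  ((B.dcpo X).2.2 E h1 h2).choose_spec

/-- Pointwise order on coalgebra spaces. -/
def leF {T : Type} (f g : T → B.obj T) : Prop := ∀ t, B.le (f t) (g t)

theorem leF_refl {T : Type} (f : T → B.obj T) : leF B f f := fun _ => B.le_refl _

theorem leF_trans {T : Type} {f g h : T → B.obj T} (h1 : leF B f g) (h2 : leF B g h) :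
    leF B f h := fun t => B.le_trans (h1 t) (h2 t)

theorem leF_anti {T : Type} (f g : T → B.obj T) (h1 : leF B f g) (h2 : leF B g f) :
    f = g := funext fun t => le_antiB B (h1 t) (h2 t)

theorem imgF_ne {T : Type} {E : Set (T → B.obj T)} (h1 : E.Nonempty) (t : T) :
    ((fun f => f t) '' E).Nonempty := h1.image _

theorem imgF_dir {T : Type} {E : Set (T → B.obj T)} (h2 : DirectedOn (leF B) E) (t : T) :
    DirectedOn (fun a b => B.le a b) ((fun f => f t) '' E) := by
  rintro _ ⟨f, hf, rfl⟩ _ ⟨g, hg, rfl⟩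
  obtain ⟨h, hh, hfh, hgh⟩ := h2 f hf g hg
  exact ⟨h t, ⟨h, hh, rfl⟩, hfh t, hgh t⟩

noncomputable def lubF {T : Type} (E : Set (T → B.obj T)) (h1 : E.Nonempty)
    (h2 : DirectedOn (leF B) E) : T → B.obj T :=
  fun t => lubB B ((fun f => f t) '' E) (imgF_ne B h1 t) (imgF_dir B h2 t)

theorem lubF_isLub {T : Type} (E : Set (T → B.obj T)) (h1 : E.Nonempty)
    (h2 : DirectedOn (leF B) E) : IsLubRel (leF B) E (lubF B E h1 h2) := by
  constructor
  · intro f hf t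
    exact (lubB_spec B _ _ _).1 _ ⟨f, hf, rfl⟩
  · intro v hv t
    refine (lubB_spec B _ _ _).2 _ ?_
    rintro _ ⟨f, hf, rfl⟩
    exact hv f hf t

end Dcpo

section PairSpace
variable (S : SetFunctor) (B : DCPOOrderedFunctor) (M : FreeMonad S)
variable {Z : Type} (bang : M.obj Empty → Z)

/-- The carrier for the paired Pataraia construction: pairs of coalgebras on
`Σ*Σ*∅` and on `Σ*Z` such that `Σ*(!)` is a coalgebra homomorphism. -/
def PCc : Type :=
  {p : ((M.obj (M.obj Empty) → B.obj (M.obj (M.obj Empty))) ×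
        (M.obj Z → B.obj (M.obj Z))) //
    ∀ t, B.map (M.mmap bang) (p.1 t) = p.2 (M.mmap bang t)}

def leP (p q : PCc S B M bang) : Prop :=
  (∀ t, B.le (p.1.1 t) (q.1.1 t)) ∧ ∀ u, B.le (p.1.2 u) (q.1.2 u)

theorem leP_refl (p : PCc S B M bang) : leP S B M bang p p :=
  ⟨fun _ => B.le_refl _, fun _ => B.le_refl _⟩

theorem leP_trans {p q r : PCc S B M bang} (h1 : leP S B M bang p q)
    (h2 : leP S B M bang q r) : leP S B M bang p r :=
  ⟨fun t => B.le_trans (h1.1 t) (h2.1 t), fun u => B.le_trans (h1.2 u) (h2.2 u)⟩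

theorem leP_anti (p q : PCc S B M bang) (h1 : leP S B M bang p q)
    (h2 : leP S B M bang q p) : p = q := by
  apply Subtype.ext
  apply Prod.ext
  · exact funext fun t => le_antiB B (h1.1 t) (h2.1 t)
  · exact funext fun u => le_antiB B (h1.2 u) (h2.2 u)

open Classical in
noncomputable def botP : PCc S B M bang :=
  ⟨(fun _ => botB B (M.obj (M.obj Empty)),
    fun u => if ∃ t, M.mmap bang t = u then
        B.map (M.mmap bang) (botB B (M.obj (M.obj Empty)))
      else botB B (M.obj Z)), by
    intro t
    exact (if_pos ⟨t, rfl⟩).symm⟩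

theorem botP_le (q : PCc S B M bang) : leP S B M bang (botP S B M bang) q := by
  classical
  constructor
  · intro t; exact botB_le B _
  · intro u
    by_cases h : ∃ t, M.mmap bang t = u
    · obtain ⟨t0, ht0⟩ := h
      have e : (botP S B M bang).1.2 u
          = B.map (M.mmap bang) (botB B (M.obj (M.obj Empty))) := if_pos ⟨t0, ht0⟩
      rw [e]
      have h2 : B.le (B.map (M.mmap bang) (botB B (M.obj (M.obj Empty))))
          (B.map (M.mmap bang) (q.1.1 t0)) := B.map_mono _ (botB_le B _)
      rw [q.2 t0, ht0] at h2
      exact h2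
    · have e : (botP S B M bang).1.2 u = botB B (M.obj Z) := if_neg h
      rw [e]; exact botB_le B _

theorem imgP1_ne {E : Set (PCc S B M bang)} (h1 : E.Nonempty) (t : M.obj (M.obj Empty)) :
    ((fun p : PCc S B M bang => p.1.1 t) '' E).Nonempty := h1.image _

theorem imgP2_ne {E : Set (PCc S B M bang)} (h1 : E.Nonempty) (u : M.obj Z) :
    ((fun p : PCc S B M bang => p.1.2 u) '' E).Nonempty := h1.image _

theorem imgP1_dir {E : Set (PCc S B M bang)} (h2 : DirectedOn (leP S B M bang) E)
    (t : M.obj (M.obj Empty)) :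
    DirectedOn (fun a b => B.le a b) ((fun p : PCc S B M bang => p.1.1 t) '' E) := by
  rintro _ ⟨p, hp, rfl⟩ _ ⟨q, hq, rfl⟩
  obtain ⟨r, hr, hpr, hqr⟩ := h2 p hp q hq
  exact ⟨r.1.1 t, ⟨r, hr, rfl⟩, hpr.1 t, hqr.1 t⟩

theorem imgP2_dir {E : Set (PCc S B M bang)} (h2 : DirectedOn (leP S B M bang) E)
    (u : M.obj Z) :
    DirectedOn (fun a b => B.le a b) ((fun p : PCc S B M bang => p.1.2 u) '' E) := by
  rintro _ ⟨p, hp, rfl⟩ _ ⟨q, hq, rfl⟩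
  obtain ⟨r, hr, hpr, hqr⟩ := h2 p hp q hq
  exact ⟨r.1.2 u, ⟨r, hr, rfl⟩, hpr.2 u, hqr.2 u⟩

theorem lubP_compat {E : Set (PCc S B M bang)} (h1 : E.Nonempty)
    (h2 : DirectedOn (leP S B M bang) E) (t : M.obj (M.obj Empty)) :
    B.map (M.mmap bang)
        (lubB B ((fun p : PCc S B M bang => p.1.1 t) '' E) (imgP1_ne S B M bang h1 t)
          (imgP1_dir S B M bang h2 t))
      = lubB B ((fun p : PCc S B M bang => p.1.2 (M.mmap bang t)) '' E)
          (imgP2_ne S B M bang h1 (M.mmap bang t))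
          (imgP2_dir S B M bang h2 (M.mmap bang t)) := by
  have hcont := B.map_cont (M.mmap bang) ((fun p : PCc S B M bang => p.1.1 t) '' E)
    (lubB B ((fun p : PCc S B M bang => p.1.1 t) '' E) (imgP1_ne S B M bang h1 t)
      (imgP1_dir S B M bang h2 t))
    (imgP1_ne S B M bang h1 t) (imgP1_dir S B M bang h2 t)
    (lubB_spec B ((fun p : PCc S B M bang => p.1.1 t) '' E) (imgP1_ne S B M bang h1 t)
      (imgP1_dir S B M bang h2 t))
  have hset : B.map (M.mmap bang) '' ((fun p : PCc S B M bang => p.1.1 t) '' E)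
      = (fun p : PCc S B M bang => p.1.2 (M.mmap bang t)) '' E := by
    ext y
    constructor
    · rintro ⟨_, ⟨p, hp, rfl⟩, rfl⟩
      exact ⟨p, hp, (p.2 t).symm⟩
    · rintro ⟨p, hp, rfl⟩
      exact ⟨p.1.1 t, ⟨p, hp, rfl⟩, p.2 t⟩
  rw [hset] at hcont
  exact isLubRel_unique _ (fun a b ha hb => le_antiB B ha hb) hcont
    (lubB_spec B ((fun p : PCc S B M bang => p.1.2 (M.mmap bang t)) '' E)
      (imgP2_ne S B M bang h1 (M.mmap bang t)) (imgP2_dir S B M bang h2 (M.mmap bang t)))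

noncomputable def lubP (E : Set (PCc S B M bang)) (h1 : E.Nonempty)
    (h2 : DirectedOn (leP S B M bang) E) : PCc S B M bang :=
  ⟨(fun t => lubB B ((fun p : PCc S B M bang => p.1.1 t) '' E)
      (imgP1_ne S B M bang h1 t) (imgP1_dir S B M bang h2 t),
    fun u => lubB B ((fun p : PCc S B M bang => p.1.2 u) '' E)
      (imgP2_ne S B M bang h1 u) (imgP2_dir S B M bang h2 u)),
   fun t => lubP_compat S B M bang h1 h2 t⟩

theorem lubP_isLub (E : Set (PCc S B M bang)) (h1 : E.Nonempty)
    (h2 : DirectedOn (leP S B M bang) E) :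
    IsLubRel (leP S B M bang) E (lubP S B M bang E h1 h2) := by
  constructor
  · intro p hp
    constructor
    · intro t
      exact (lubB_spec B ((fun p : PCc S B M bang => p.1.1 t) '' E)
        (imgP1_ne S B M bang h1 t) (imgP1_dir S B M bang h2 t)).1 _ ⟨p, hp, rfl⟩
    · intro u
      exact (lubB_spec B ((fun p : PCc S B M bang => p.1.2 u) '' E)
        (imgP2_ne S B M bang h1 u) (imgP2_dir S B M bang h2 u)).1 _ ⟨p, hp, rfl⟩
  · intro v hv
    constructor
    · intro t
      refine (lubB_spec B ((fun p : PCc S B M bang => p.1.1 t) '' E)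
        (imgP1_ne S B M bang h1 t) (imgP1_dir S B M bang h2 t)).2 _ ?_
      rintro _ ⟨p, hp, rfl⟩
      exact (hv p hp).1 t
    · intro u
      refine (lubB_spec B ((fun p : PCc S B M bang => p.1.2 u) '' E)
        (imgP2_ne S B M bang h1 u) (imgP2_dir S B M bang h2 u)).2 _ ?_
      rintro _ ⟨p, hp, rfl⟩
      exact (hv p hp).2 u

end PairSpace

end S11
theorem statement11 (S : SetFunctor) (B : DCPOOrderedFunctor)
    (hwp : B.toOrderedFunctor.toSetFunctor.PreservesWeakPullbacks)
    (W : Cofree B.toOrderedFunctor.toSetFunctor) (M : FreeMonad S)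
    (ρ : BiGSOS S B.toOrderedFunctor W M) (hmono : ρ.Monotone)
    (m : M.obj Empty → B.obj (M.obj Empty)) (hm : IsLeastSupportedModel ρ m)
    (Z : Type) (ζ : Z → B.obj Z)
    (hfinal : ∀ (C : Type) (c : C → B.obj C),
      ∃! h : C → Z, IsCoalgHom B.toOrderedFunctor.toSetFunctor c ζ h)
    (bang : M.obj Empty → Z)
    (hbang : IsCoalgHom B.toOrderedFunctor.toSetFunctor m ζ bang) :
    ∃ β : M.obj Z → Z, ∀ t : M.obj (M.obj Empty), bang (M.μ t) = β (M.mmap bang t) := by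
  classical
  -- The joint operator on the pair space.
  have hΘdef : ∀ p : S11.PCc S B M bang,
      ∀ t, B.map (M.mmap bang) (phiC ρ m p.1.1 t) = phiC ρ ζ p.1.2 (M.mmap bang t) :=
    fun p => S11.Cclos ρ m ζ bang hbang p.1.1 p.1.2 p.2
  have hΘmono : ∀ {p q : S11.PCc S B M bang}, S11.leP S B M bang p q →
      S11.leP S B M bang
        (⟨(phiC ρ m p.1.1, phiC ρ ζ p.1.2), hΘdef p⟩ : S11.PCc S B M bang)
        ⟨(phiC ρ m q.1.1, phiC ρ ζ q.1.2), hΘdef q⟩ := by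
    intro p q h
    exact ⟨fun t => S11.phiC_mono ρ hmono m p.1.1 q.1.1 h.1 t,
           fun u => S11.phiC_mono ρ hmono ζ p.1.2 q.1.2 h.2 u⟩
  obtain ⟨P0, hPfix, -, hPind⟩ := S11.pataraia (S11.leP S B M bang)
    (S11.leP_refl S B M bang) (fun h1 h2 => S11.leP_trans S B M bang h1 h2)
    (S11.botP S B M bang) (S11.botP_le S B M bang)
    (fun E h1 h2 => ⟨S11.lubP S B M bang E h1 h2, S11.lubP_isLub S B M bang E h1 h2⟩)
    (S11.leP_anti S B M bang)
    (fun p => ⟨(phiC ρ m p.1.1, phiC ρ ζ p.1.2), hΘdef p⟩)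
    (fun {p q} h => hΘmono h)
  have hfix1 : phiC ρ m P0.1.1 = P0.1.1 :=
    congrArg (fun p : S11.PCc S B M bang => p.1.1) hPfix
  -- `m` is the Pataraia least fixed point of `phiC ρ c∅`.
  obtain ⟨m0, hm0fix, hm0least, hm0ind⟩ := S11.pataraia (S11.leF B)
    (S11.leF_refl B) (fun h1 h2 => S11.leF_trans B h1 h2)
    (fun _ => S11.botB B (M.obj Empty)) (fun f t => S11.botB_le B (f t))
    (fun E h1 h2 => ⟨S11.lubF B E h1 h2, S11.lubF_isLub B E h1 h2⟩)
    (S11.leF_anti B) (phiC ρ (fun x : Empty => x.elim))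
    (fun {f g} h t => S11.phiC_mono ρ hmono (fun x : Empty => x.elim) f g h t)
  have hmfixE : phiC ρ (fun x : Empty => x.elim) m = m := by
    funext t
    rcases hd : M.dest t with s | x
    · rw [S11.phiC_unfold_inl ρ (fun x : Empty => x.elim) m hd, S11.eq_iota_of_dest hd]
      exact (hm.1 s).symm
    · exact x.elim
  have hm0supp : IsSupportedModel ρ m0 := by
    intro t
    have h := congrFun hm0fix (M.ι t)
    rw [S11.phiC_unfold_inl ρ (fun x : Empty => x.elim) m0 (M.dest_ι t)] at h
    exact h.symm
  have hm_eq : m = m0 := funext fun t =>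
    S11.le_antiB B (hm.2 m0 hm0supp t) (hm0least m hmfixE t)
  -- Direction 1: `B.map μ ∘ ê ⊑ m ∘ μ`.
  have hDir1 : ∀ u, B.le (B.map M.μ (P0.1.1 u)) (m (M.μ u)) := by
    refine hPind {p : S11.PCc S B M bang |
        ∀ u, B.le (B.map M.μ (p.1.1 u)) (m (M.μ u))} ⟨?_, ?_, ?_⟩
    · intro u
      rcases hd : M.dest (M.μ u) with s | x
      · rw [S11.eq_iota_of_dest hd, hm.1 s]
        exact B.map_mono _ (S11.botB_le B _)
      · exact x.elim
    · intro p hp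
      exact S11.dir1_step ρ m hmono hm.1 p.1.1 hp
    · intro E hE h1 h2 u hu
      have hueq : u = S11.lubP S B M bang E h1 h2 :=
        S11.isLubRel_unique _ (S11.leP_anti S B M bang) hu
          (S11.lubP_isLub S B M bang E h1 h2)
      subst hueq
      intro t
      have hcont := B.map_cont M.μ ((fun p : S11.PCc S B M bang => p.1.1 t) '' E)
        (S11.lubB B ((fun p : S11.PCc S B M bang => p.1.1 t) '' E)
          (S11.imgP1_ne S B M bang h1 t) (S11.imgP1_dir S B M bang h2 t))
        (S11.imgP1_ne S B M bang h1 t) (S11.imgP1_dir S B M bang h2 t)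
        (S11.lubB_spec B ((fun p : S11.PCc S B M bang => p.1.1 t) '' E)
          (S11.imgP1_ne S B M bang h1 t) (S11.imgP1_dir S B M bang h2 t))
      refine hcont.2 (m (M.μ t)) ?_
      rintro _ ⟨_, ⟨p, hp, rfl⟩, rfl⟩
      exact hE hp t
  -- Direction 2: `m ∘ μ ⊑ B.map μ ∘ ê`, by induction on the construction of `m`.
  have hst2 : (∀ u, B.le (m0 (M.μ u)) (B.map M.μ (P0.1.1 u))) ∧
      ∀ x, B.le (m0 x) (m x) := by
    refine hm0ind {f' : M.obj Empty → B.obj (M.obj Empty) |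
      (∀ u, B.le (f' (M.μ u)) (B.map M.μ (P0.1.1 u))) ∧ ∀ x, B.le (f' x) (m x)}
      ⟨?_, ?_, ?_⟩
    · exact ⟨fun u => S11.botB_le B _, fun x => S11.botB_le B _⟩
    · intro f' hf'
      exact S11.dir2_step ρ m hmono hm.1 hmfixE P0.1.1 hfix1 f' hf'.1 hf'.2
    · intro E hE h1 h2 u hu
      have hueq : u = S11.lubF B E h1 h2 :=
        S11.isLubRel_unique _ (S11.leF_anti B) hu (S11.lubF_isLub B E h1 h2)
      subst hueq
      constructor
      · intro t
        refine (S11.lubB_spec B ((fun f => f (M.μ t)) '' E)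
          (S11.imgF_ne B h1 (M.μ t)) (S11.imgF_dir B h2 (M.μ t))).2 _ ?_
        rintro _ ⟨f, hf, rfl⟩
        exact (hE hf).1 t
      · intro x
        refine (S11.lubB_spec B ((fun f => f x) '' E)
          (S11.imgF_ne B h1 x) (S11.imgF_dir B h2 x)).2 _ ?_
        rintro _ ⟨f, hf, rfl⟩
        exact (hE hf).2 x
  have hDir2 : ∀ u, B.le (m (M.μ u)) (B.map M.μ (P0.1.1 u)) := by
    rw [hm_eq]; exact hst2.1
  have hDex : ∀ u, B.map M.μ (P0.1.1 u) = m (M.μ u) :=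
    fun u => S11.le_antiB B (hDir1 u) (hDir2 u)
  -- Conclude by finality.
  obtain ⟨β₂, hβ₂, -⟩ := hfinal (M.obj Z) P0.1.2
  obtain ⟨h0, hh0, huniq⟩ := hfinal (M.obj (M.obj Empty)) P0.1.1
  have hom1 : IsCoalgHom B.toOrderedFunctor.toSetFunctor P0.1.1 ζ
      (fun u => bang (M.μ u)) := by
    intro u
    have e : B.map (fun v => bang (M.μ v)) (P0.1.1 u)
        = B.map bang (B.map M.μ (P0.1.1 u)) :=
      (S11.map_map B.toOrderedFunctor.toSetFunctor M.μ bang (P0.1.1 u)).symm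
    rw [e, hDex u, hbang (M.μ u)]
  have hom2 : IsCoalgHom B.toOrderedFunctor.toSetFunctor P0.1.1 ζ
      (fun u => β₂ (M.mmap bang u)) := by
    intro u
    have e : B.map (fun v => β₂ (M.mmap bang v)) (P0.1.1 u)
        = B.map β₂ (B.map (M.mmap bang) (P0.1.1 u)) :=
      (S11.map_map B.toOrderedFunctor.toSetFunctor (M.mmap bang) β₂ (P0.1.1 u)).symm
    rw [e, P0.2 u, hβ₂ (M.mmap bang u)]
  have heq : (fun u => bang (M.μ u)) = fun u => β₂ (M.mmap bang u) :=
    (huniq _ hom1).trans (huniq _ hom2).symm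
  exact ⟨β₂, fun t => congrFun heq t⟩
end

section
/- Let B : Set → Set be countably accessible, and suppose (T_c, η^c, μ^c) is a monad on the category cSet of countable sets which lifts to a monad (T̄_c, η̄^c, μ̄^c) on the category Coalg_c(B) of B-coalgebras with countable carrier. Then: (1) (T_c, η^c, μ^c) extends to a monad (T, η, μ) on Set along the inclusion I : cSet → Set; (2) (T̄_c, η̄^c, μ̄^c) extends to a monad (T̄, η̄, μ̄) on Coalg(B) along the inclusion Ī : Coalg_c(B) → Coalg(B); and (3) (T̄, η̄, μ̄) is a lifting up to isomorphism of (T, η, μ) to Coalg(B). -/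
theorem isCoalgHom_id (B : SetFunctor) {X : Type} (f : X → B.obj X) :
    IsCoalgHom B f f id := by
  intro x; rw [B.map_id]; rfl

theorem isCoalgHom_comp (B : SetFunctor) {X Y Z : Type} {f : X → B.obj X}
    {g : Y → B.obj Y} {e : Z → B.obj Z} {h₁ : X → Y} {h₂ : Y → Z}
    (hh₁ : IsCoalgHom B f g h₁) (hh₂ : IsCoalgHom B g e h₂) :
    IsCoalgHom B f e (h₂ ∘ h₁) := by
  intro x
  have := congrFun (B.map_comp h₁ h₂) (f x)
  simp only [Function.comp] at this ⊢
  rw [this, hh₁, hh₂]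

/-- A `Set`-functor is countably accessible: every element of `BX` is the image of
an element of `BY` for some countable subset `Y ↪ X`. -/
def SetFunctor.CountablyAccessible (B : SetFunctor) : Prop :=
  ∀ (X : Type) (x : B.obj X), ∃ (Y : Type) (_ : Countable Y) (i : Y → X),
    Function.Injective i ∧ ∃ y : B.obj Y, B.map i y = x

/-- A monad on `Set`, presented concretely. -/
structure SetMonad extends SetFunctor where
  η : {X : Type} → X → obj X
  μ : {X : Type} → obj (obj X) → obj X
  η_nat : ∀ {X Y : Type} (f : X → Y) (x : X), map f (η x) = η (f x)
  μ_nat : ∀ {X Y : Type} (f : X → Y) (t : obj (obj X)), map f (μ t) = μ (map (map f) t)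
  left_unit : ∀ {X : Type} (t : obj X), μ (η t) = t
  right_unit : ∀ {X : Type} (t : obj X), μ (map η t) = t
  assoc : ∀ {X : Type} (t : obj (obj (obj X))), μ (μ t) = μ (map μ t)

/-- An object of `cSet`, the category of countable sets. -/
structure CSet where
  carrier : Type
  cnt : Countable carrier

/-- A monad on the category `cSet` of countable sets, presented concretely. -/
structure CntMonad where
  obj : CSet → CSet
  map : {X Y : CSet} → (X.carrier → Y.carrier) → (obj X).carrier → (obj Y).carrier
  map_id : ∀ {X : CSet}, map (id : X.carrier → X.carrier) = id
  map_comp : ∀ {X Y Z : CSet} (f : X.carrier → Y.carrier) (g : Y.carrier → Z.carrier),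
    map (g ∘ f) = map g ∘ map f
  η : {X : CSet} → X.carrier → (obj X).carrier
  μ : {X : CSet} → (obj (obj X)).carrier → (obj X).carrier
  η_nat : ∀ {X Y : CSet} (f : X.carrier → Y.carrier) (x : X.carrier),
    map f (η x) = η (f x)
  μ_nat : ∀ {X Y : CSet} (f : X.carrier → Y.carrier) (t : (obj (obj X)).carrier),
    map f (μ t) = μ (map (map f) t)
  left_unit : ∀ {X : CSet} (t : (obj X).carrier), μ (η t) = t
  right_unit : ∀ {X : CSet} (t : (obj X).carrier), μ (map η t) = t
  assoc : ∀ {X : CSet} (t : (obj (obj (obj X))).carrier), μ (μ t) = μ (map μ t)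

/-- An object of `Coalg(B)`: a `B`-coalgebra. -/
structure BCoalg (B : SetFunctor) where
  carrier : Type
  str : carrier → B.obj carrier

/-- An object of `Coalg_c(B)`: a `B`-coalgebra with countable carrier. -/
structure CBCoalg (B : SetFunctor) where
  carrier : Type
  cnt : Countable carrier
  str : carrier → B.obj carrier

def CBCoalg.toCSet {B : SetFunctor} (c : CBCoalg B) : CSet := ⟨c.carrier, c.cnt⟩

def CBCoalg.toBCoalg {B : SetFunctor} (c : CBCoalg B) : BCoalg B := ⟨c.carrier, c.str⟩

/-- A lifting of the monad `T` on `cSet` to `Coalg_c(B)`: it sends a coalgebra with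
countable carrier `X` to a coalgebra on `T X` (so `U T̄ = T U`, `U η̄ = η U` and
`U μ̄ = μ U` hold on the nose), functorially, with `η` and `μ` becoming coalgebra
homomorphisms. -/
structure CntMonadLifting (B : SetFunctor) (T : CntMonad) where
  lift : (c : CBCoalg B) → (T.obj c.toCSet).carrier → B.obj (T.obj c.toCSet).carrier
  map_hom : ∀ (c d : CBCoalg B) (h : c.carrier → d.carrier),
    IsCoalgHom B c.str d.str h →
      IsCoalgHom B (lift c) (lift d) (T.map (X := c.toCSet) (Y := d.toCSet) h)
  η_hom : ∀ c : CBCoalg B, IsCoalgHom B c.str (lift c) (T.η (X := c.toCSet))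
  μ_hom : ∀ c : CBCoalg B,
    IsCoalgHom B (lift ⟨(T.obj c.toCSet).carrier, (T.obj c.toCSet).cnt, lift c⟩)
      (lift c) (T.μ (X := c.toCSet))

/-- The coalgebra with countable carrier obtained by applying a lifting to `c`. -/
def CntMonadLifting.apply {B : SetFunctor} {T : CntMonad} (L : CntMonadLifting B T)
    (c : CBCoalg B) : CBCoalg B :=
  ⟨(T.obj c.toCSet).carrier, (T.obj c.toCSet).cnt, L.lift c⟩

/-- A monad on the category `Coalg(B)` of `B`-coalgebras, presented concretely. -/
structure BCoalgMonad (B : SetFunctor) where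
  obj : BCoalg B → BCoalg B
  map : {c d : BCoalg B} → (h : c.carrier → d.carrier) → IsCoalgHom B c.str d.str h →
    (obj c).carrier → (obj d).carrier
  map_hom : ∀ {c d : BCoalg B} (h : c.carrier → d.carrier)
    (hh : IsCoalgHom B c.str d.str h), IsCoalgHom B (obj c).str (obj d).str (map h hh)
  map_id : ∀ {c : BCoalg B}, map id (isCoalgHom_id B c.str) = id
  map_comp : ∀ {c d e : BCoalg B} (h₁ : c.carrier → d.carrier)
    (hh₁ : IsCoalgHom B c.str d.str h₁) (h₂ : d.carrier → e.carrier)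
    (hh₂ : IsCoalgHom B d.str e.str h₂),
    map (h₂ ∘ h₁) (isCoalgHom_comp B hh₁ hh₂) = map h₂ hh₂ ∘ map h₁ hh₁
  η : (c : BCoalg B) → c.carrier → (obj c).carrier
  η_hom : ∀ c : BCoalg B, IsCoalgHom B c.str (obj c).str (η c)
  μ : (c : BCoalg B) → (obj (obj c)).carrier → (obj c).carrier
  μ_hom : ∀ c : BCoalg B, IsCoalgHom B (obj (obj c)).str (obj c).str (μ c)
  η_nat : ∀ {c d : BCoalg B} (h : c.carrier → d.carrier)
    (hh : IsCoalgHom B c.str d.str h) (x : c.carrier), map h hh (η c x) = η d (h x)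
  μ_nat : ∀ {c d : BCoalg B} (h : c.carrier → d.carrier)
    (hh : IsCoalgHom B c.str d.str h) (t : (obj (obj c)).carrier),
    map h hh (μ c t) = μ d (map (map h hh) (map_hom h hh) t)
  left_unit : ∀ (c : BCoalg B) (t : (obj c).carrier), μ c (η (obj c) t) = t
  right_unit : ∀ (c : BCoalg B) (t : (obj c).carrier), μ c (map (η c) (η_hom c) t) = t
  assoc : ∀ (c : BCoalg B) (t : (obj (obj (obj c))).carrier),
    μ c (μ (obj c) t) = μ c (map (μ c) (μ_hom c) t)

/-- A monad `T` on `Set` extends the monad `Tc` on `cSet` along the inclusion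
`I : cSet → Set`: a natural isomorphism `α : I Tc ≅ T I` compatible with units
and multiplications. -/
def SetMonadExtends (Tc : CntMonad) (T : SetMonad) : Prop :=
  ∃ α : (X : CSet) → (Tc.obj X).carrier → T.obj X.carrier,
    (∀ X : CSet, Function.Bijective (α X)) ∧
    (∀ (X Y : CSet) (f : X.carrier → Y.carrier) (t : (Tc.obj X).carrier),
      α Y (Tc.map f t) = T.map f (α X t)) ∧
    (∀ (X : CSet) (x : X.carrier), α X (Tc.η x) = T.η x) ∧
    (∀ (X : CSet) (t : (Tc.obj (Tc.obj X)).carrier),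
      α X (Tc.μ t) = T.μ (T.map (α X) (α (Tc.obj X) t)))

/-- A monad `Tb` on `Coalg(B)` extends the lifted monad `T̄c` (given by the lifting
`L` of `Tc`) along the inclusion `Ī : Coalg_c(B) → Coalg(B)`: a natural
isomorphism of coalgebras compatible with units and multiplications. -/
def BCoalgMonadExtends (B : SetFunctor) (Tc : CntMonad) (L : CntMonadLifting B Tc)
    (Tb : BCoalgMonad B) : Prop :=
  ∃ (α : (c : CBCoalg B) → (Tc.obj c.toCSet).carrier → (Tb.obj c.toBCoalg).carrier)
    (hstr : ∀ c : CBCoalg B, IsCoalgHom B (L.lift c) (Tb.obj c.toBCoalg).str (α c)),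
    (∀ c : CBCoalg B, Function.Bijective (α c)) ∧
    (∀ (c d : CBCoalg B) (h : c.carrier → d.carrier) (hh : IsCoalgHom B c.str d.str h)
      (t : (Tc.obj c.toCSet).carrier), α d (Tc.map h t) = Tb.map h hh (α c t)) ∧
    (∀ (c : CBCoalg B) (x : c.carrier), α c (Tc.η x) = Tb.η c.toBCoalg x) ∧
    (∀ (c : CBCoalg B) (t : (Tc.obj (Tc.obj c.toCSet)).carrier),
      α c (Tc.μ t) =
        Tb.μ c.toBCoalg (Tb.map (α c) (hstr c) (α (L.apply c) t)))

/-- `Tb` is a lifting up to isomorphism of the `Set`-monad `T` to `Coalg(B)`: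
a natural isomorphism `β : U T̄ ≅ T U` compatible with units and multiplications. -/
def IsLiftingUpToIso (B : SetFunctor) (T : SetMonad) (Tb : BCoalgMonad B) : Prop :=
  ∃ β : (c : BCoalg B) → (Tb.obj c).carrier → T.obj c.carrier,
    (∀ c : BCoalg B, Function.Bijective (β c)) ∧
    (∀ (c d : BCoalg B) (h : c.carrier → d.carrier) (hh : IsCoalgHom B c.str d.str h)
      (t : (Tb.obj c).carrier), β d (Tb.map h hh t) = T.map h (β c t)) ∧
    (∀ (c : BCoalg B) (x : c.carrier), β c (Tb.η c x) = T.η x) ∧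
    (∀ (c : BCoalg B) (t : (Tb.obj (Tb.obj c)).carrier),
      β c (Tb.μ c t) = T.μ (T.map (β c) (β (Tb.obj c) t)))


/-!
The extension of `Tc` is its left Kan extension along `cSet ⊆ Set`, i.e. the filtered colimit
`T X = colim Tc S` over the countable subsets `S ⊆ X`. Any countable family of elements of
`T X` comes from a single stage `Tc U`, so the Kleisli extension of `Tc` passes to the colimit
and makes `T` a monad; for countable `X` the stage `S = X` is terminal, so `T` extends `Tc`.

For a coalgebra `C`, countable accessibility puts every countable subset of `C` into a
countable subcoalgebra `W`, so `T C` is also the colimit of the lifted coalgebras `T̄c W`, whose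
connecting maps are homomorphisms; this gives the coalgebra structure on `T C`. Whether `T h`,
`η` or `μ` is a homomorphism can be checked stage by stage, where it follows from the lifting.
For `μ` one uses that every countable subcoalgebra of `T C` factors through a single `T̄c U`,
along the map `Tc U → T C`, which is injective once `U` is nonempty.
-/

instance CSet.instCountableCarrier (X : CSet) : Countable X.carrier := X.cnt

def CSet.of (α : Type) [Countable α] : CSet := ⟨α, inferInstance⟩

instance Set.instCountableUnion {X : Type} (s t : Set X) [Countable s] [Countable t] :
    Countable ↥(s ∪ t) :=
  ((Set.to_countable s).union (Set.to_countable t)).to_subtype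

instance Set.instCountableIUnion {X ι : Type} [Countable ι] (s : ι → Set X)
    [∀ i, Countable (s i)] : Countable ↥(⋃ i, s i) :=
  (Set.countable_iUnion fun i => Set.to_countable (s i)).to_subtype

theorem exists_countable_superset_closed {X : Type} (N : X → Set X)
    (hN : ∀ x, (N x).Countable) {S : Set X} (hS : S.Countable) :
    ∃ W : Set X, S ⊆ W ∧ W.Countable ∧ ∀ x ∈ W, N x ⊆ W := by
  let step : Set X → Set X := fun A => A ∪ ⋃ x ∈ A, N x
  have hstep : ∀ n, (step^[n] S).Countable := by
    intro n
    induction n with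
    | zero => exact hS
    | succ n ih =>
      rw [Function.iterate_succ_apply']
      exact ih.union (ih.biUnion fun x _ => hN x)
  refine ⟨⋃ n, step^[n] S, Set.subset_iUnion (fun n => step^[n] S) 0,
    Set.countable_iUnion hstep, fun x hx => ?_⟩
  obtain ⟨n, hn⟩ := Set.mem_iUnion.1 hx
  refine Set.Subset.trans ?_ (Set.subset_iUnion _ (n + 1))
  rw [Function.iterate_succ_apply']
  exact Set.subset_union_of_subset_right (Set.subset_biUnion_of_mem hn) _

namespace SetMonad

variable (m : Type → Type) [Monad m] [LawfulMonad m]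

def ofLawfulMonad : SetMonad where
  obj := m
  map f x := f <$> x
  map_id := funext id_map
  map_comp f g := funext (comp_map f g)
  η := pure
  μ t := t >>= id
  η_nat := map_pure
  μ_nat f t := by simp only [map_bind, bind_map_left, id]
  left_unit t := pure_bind t id
  right_unit t := by simp only [bind_map_left, id, bind_pure]
  assoc t := by simp only [bind_assoc, bind_map_left, id]

end SetMonad

namespace CntMonad

variable (T : CntMonad)

abbrev Obj (α : Type) [Countable α] : Type := (T.obj (.of α)).carrier

variable {T} {α β γ : Type} [Countable α] [Countable β] [Countable γ]

variable (T) in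
def fmap (f : α → β) : T.Obj α → T.Obj β := T.map (X := .of α) (Y := .of β) f

variable (T) in
def unit (a : α) : T.Obj α := T.η (X := .of α) a

variable (T) in
def join (t : T.Obj (T.Obj α)) : T.Obj α := T.μ (X := .of α) t

variable (T) in
def bind (τ : α → T.Obj β) (t : T.Obj α) : T.Obj β := T.join (T.fmap τ t)

theorem fmap_id (t : T.Obj α) : T.fmap id t = t :=
  congrFun (T.map_id (X := .of α)) t

theorem fmap_fmap (f : α → β) (g : β → γ) (t : T.Obj α) :
    T.fmap g (T.fmap f t) = T.fmap (g ∘ f) t :=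
  (congrFun (T.map_comp (X := .of α) (Y := .of β) (Z := .of γ) f g) t).symm

theorem fmap_unit (f : α → β) (a : α) : T.fmap f (T.unit a) = T.unit (f a) :=
  T.η_nat (X := .of α) (Y := .of β) f a

theorem fmap_join (f : α → β) (t : T.Obj (T.Obj α)) :
    T.fmap f (T.join t) = T.bind (T.fmap f) t :=
  T.μ_nat (X := .of α) (Y := .of β) f t

theorem bind_unit (τ : α → T.Obj β) (a : α) : T.bind τ (T.unit a) = τ a := by
  rw [bind, fmap_unit]
  exact T.left_unit (X := .of β) (τ a)

theorem bind_unit_comp (f : α → β) (t : T.Obj α) : T.bind (T.unit ∘ f) t = T.fmap f t := by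
  rw [bind, ← fmap_fmap]
  exact T.right_unit (X := .of β) _

theorem bind_fmap (f : α → β) (τ : β → T.Obj γ) (t : T.Obj α) :
    T.bind τ (T.fmap f t) = T.bind (τ ∘ f) t := by
  rw [bind, bind, fmap_fmap]

theorem fmap_bind (τ : α → T.Obj β) (f : β → γ) (t : T.Obj α) :
    T.fmap f (T.bind τ t) = T.bind (T.fmap f ∘ τ) t := by
  rw [bind, fmap_join, bind_fmap]

theorem bind_bind (τ : α → T.Obj β) (σ : β → T.Obj γ) (t : T.Obj α) :
    T.bind σ (T.bind τ t) = T.bind (fun a => T.bind σ (τ a)) t := by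
  calc T.bind σ (T.bind τ t) = T.join (T.join (T.fmap (T.fmap σ ∘ τ) t)) := by
        rw [bind, bind, fmap_join, bind_fmap]; rfl
    _ = T.join (T.fmap T.join (T.fmap (T.fmap σ ∘ τ) t)) := T.assoc (X := .of γ) _
    _ = T.bind (fun a => T.bind σ (τ a)) t := by rw [fmap_fmap]; rfl

theorem fmap_inclusion_inclusion {X : Type} {S V W : Set X} [Countable S] [Countable V]
    [Countable W] (h₁ : S ⊆ V) (h₂ : V ⊆ W) (t : T.Obj S) :
    T.fmap (Set.inclusion h₂) (T.fmap (Set.inclusion h₁) t)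
      = T.fmap (Set.inclusion (h₁.trans h₂)) t :=
  fmap_fmap _ _ t

structure Rep (T : CntMonad) (X : Type) where
  support : Set X
  [countable : Countable support]
  val : T.Obj support

attribute [instance] Rep.countable

variable {X Y Z : Type}

def Rep.Rel (p q : T.Rep X) : Prop :=
  ∃ (V : Set X) (_ : Countable V) (hp : p.support ⊆ V) (hq : q.support ⊆ V),
    T.fmap (Set.inclusion hp) p.val = T.fmap (Set.inclusion hq) q.val

theorem Rep.rel_equivalence : Equivalence (Rep.Rel (T := T) (X := X)) where
  refl p := ⟨p.support, inferInstance, subset_rfl, subset_rfl, rfl⟩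
  symm := fun ⟨V, hV, hp, hq, e⟩ => ⟨V, hV, hq, hp, e.symm⟩
  trans := fun ⟨V, _, hp, hq, e⟩ ⟨V', _, hq', hr', e'⟩ => by
    refine ⟨V ∪ V', inferInstance, hp.trans Set.subset_union_left,
      hr'.trans Set.subset_union_right, ?_⟩
    rw [← fmap_inclusion_inclusion hp Set.subset_union_left, e, fmap_inclusion_inclusion,
      ← fmap_inclusion_inclusion hq' Set.subset_union_right, e', fmap_inclusion_inclusion]

variable (T) in
def Rep.setoid (X : Type) : Setoid (T.Rep X) := ⟨Rep.Rel, Rep.rel_equivalence⟩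

/-- The colimit of `T S` over the countable subsets `S ⊆ X`. -/
def Ext (T : CntMonad) (X : Type) : Type := Quotient (Rep.setoid T X)

namespace Ext

def mk (S : Set X) [Countable S] (t : T.Obj S) : T.Ext X := Quotient.mk _ ⟨S, t⟩

variable {S S' V : Set X} [Countable S] [Countable S'] [Countable V]

theorem mk_eq_mk (h : S ⊆ V) (h' : S' ⊆ V) {t : T.Obj S} {t' : T.Obj S'}
    (e : T.fmap (Set.inclusion h) t = T.fmap (Set.inclusion h') t') : mk S t = mk S' t' :=
  Quotient.sound ⟨V, inferInstance, h, h', e⟩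

theorem exists_of_mk_eq {t : T.Obj S} {t' : T.Obj S'} (e : mk S t = mk S' t') :
    ∃ (V : Set X) (_ : Countable V) (h : S ⊆ V) (h' : S' ⊆ V),
      T.fmap (Set.inclusion h) t = T.fmap (Set.inclusion h') t' :=
  Quotient.exact e

theorem mk_fmap_inclusion (h : S ⊆ V) (t : T.Obj S) :
    mk V (T.fmap (Set.inclusion h) t) = mk S t :=
  mk_eq_mk subset_rfl h (fmap_inclusion_inclusion h subset_rfl t)

theorem exists_mk_eq (x : T.Ext X) : ∃ (S : Set X) (_ : Countable S) (t : T.Obj S), mk S t = x :=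
  Quotient.inductionOn x fun p => ⟨p.support, p.countable, p.val, rfl⟩

theorem mk_injective (hS : IsEmpty X ∨ S.Nonempty) :
    Function.Injective (mk S : T.Obj S → T.Ext X) := by
  intro t t' e
  obtain ⟨V, _, h, h', e'⟩ := exists_of_mk_eq e
  -- `T` preserves the retraction of `S ⊆ V`; for `S = ∅ ≠ V` there is none.
  obtain ⟨r, hr⟩ : Function.HasLeftInverse (Set.inclusion h) := by
    rcases hS with hX | ⟨s, hs⟩
    · exact ⟨fun v => isEmptyElim (v : X), fun s => isEmptyElim (s : X)⟩
    · have : Nonempty S := ⟨⟨s, hs⟩⟩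
      exact (Set.inclusion_injective h).hasLeftInverse
  have hr' : r ∘ Set.inclusion h = id := funext hr
  simpa only [fmap_fmap, hr', fmap_id] using congrArg (T.fmap r) e'

structure Lift (g : α → T.Ext X) where
  support : Set X
  [countable : Countable support]
  val : α → T.Obj support
  mk_val : ∀ a, Ext.mk support (val a) = g a

attribute [instance] Lift.countable

theorem nonempty_lift (g : α → T.Ext X) : Nonempty (Lift g) := by
  choose S _ t ht using fun a => exists_mk_eq (g a)
  exact ⟨⟨⋃ a, S a, fun a => T.fmap (Set.inclusion (Set.subset_iUnion S a)) (t a),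
    fun a => by rw [mk_fmap_inclusion, ht]⟩⟩

def Lift.comp {g : α → T.Ext X} (l : Lift g) (f : β → α) : Lift (g ∘ f) :=
  ⟨l.support, l.val ∘ f, fun b => l.mk_val (f b)⟩

theorem Lift.mk_bind_eq {g : α → T.Ext X} (l l' : Lift g) (t : T.Obj α) :
    Ext.mk l.support (T.bind l.val t) = Ext.mk l'.support (T.bind l'.val t) := by
  choose W _ h h' e using fun a => exists_of_mk_eq ((l.mk_val a).trans (l'.mk_val a).symm)
  let U := l.support ∪ l'.support ∪ ⋃ a, W a
  have hW : ∀ a, W a ⊆ U := fun a => (Set.subset_iUnion W a).trans Set.subset_union_right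
  have hl : l.support ⊆ U := Set.subset_union_left.trans Set.subset_union_left
  have hl' : l'.support ⊆ U := Set.subset_union_right.trans Set.subset_union_left
  have e' : T.fmap (Set.inclusion hl) ∘ l.val = T.fmap (Set.inclusion hl') ∘ l'.val := by
    funext a
    simp only [Function.comp_apply]
    rw [← fmap_inclusion_inclusion (h a) (hW a), e, fmap_inclusion_inclusion]
  rw [← mk_fmap_inclusion hl, ← mk_fmap_inclusion hl', fmap_bind, fmap_bind, e']

end Ext

noncomputable def Rep.bind (p : T.Rep Y) (g : Y → T.Ext X) : T.Ext X :=
  let l := (Ext.nonempty_lift (g ∘ Subtype.val : p.support → T.Ext X)).some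
  Ext.mk l.support (T.bind l.val p.val)

theorem Rep.bind_eq (p : T.Rep Y) (g : Y → T.Ext X)
    (l : Ext.Lift (g ∘ Subtype.val : p.support → _)) :
    p.bind g = Ext.mk l.support (T.bind l.val p.val) :=
  Ext.Lift.mk_bind_eq _ _ _

theorem Rep.bind_eq_of_rel {p q : T.Rep Y} (h : p.Rel q) (g : Y → T.Ext X) :
    p.bind g = q.bind g := by
  obtain ⟨V, _, hp, hq, e⟩ := h
  let l := (Ext.nonempty_lift (g ∘ Subtype.val : V → T.Ext X)).some
  rw [p.bind_eq g (l.comp (Set.inclusion hp)), q.bind_eq g (l.comp (Set.inclusion hq))]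
  exact congrArg (Ext.mk l.support)
    ((bind_fmap (Set.inclusion hp) l.val p.val).symm.trans
      ((congrArg (T.bind l.val) e).trans (bind_fmap (Set.inclusion hq) l.val q.val)))

namespace Ext

variable {S : Set X} [Countable S]

noncomputable def bind (x : T.Ext Y) (g : Y → T.Ext X) : T.Ext X :=
  Quotient.liftOn x (Rep.bind · g) fun _ _ h => Rep.bind_eq_of_rel h g

theorem bind_mk (t : T.Obj S) (g : X → T.Ext Y) (l : Lift (g ∘ Subtype.val : S → _)) :
    bind (mk S t) g = mk l.support (T.bind l.val t) :=
  Rep.bind_eq ⟨S, t⟩ g l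

variable (T) in
def pure (x : X) : T.Ext X := mk {x} (T.unit ⟨x, rfl⟩)

theorem pure_eq_mk (s : S) : pure T (s : X) = mk S (T.unit s) := by
  rw [Ext.pure, ← mk_fmap_inclusion (Set.singleton_subset_iff.2 s.2), fmap_unit]

theorem pure_bind (x : X) (g : X → T.Ext Y) : bind (pure T x) g = g x := by
  let l := (nonempty_lift (g ∘ Subtype.val : ({x} : Set X) → _)).some
  rw [Ext.pure, bind_mk _ g l, CntMonad.bind_unit]
  exact l.mk_val _

theorem bind_pure (x : T.Ext X) : bind x (pure T) = x := by
  obtain ⟨S, _, t, rfl⟩ := exists_mk_eq x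
  rw [bind_mk t _ ⟨S, T.unit, fun s => (pure_eq_mk s).symm⟩]
  exact congrArg (mk S) (bind_unit_comp id t |>.trans (fmap_id t))

theorem bind_assoc (x : T.Ext X) (g : X → T.Ext Y) (h : Y → T.Ext Z) :
    bind (bind x g) h = bind x fun a => bind (g a) h := by
  obtain ⟨S, _, t, rfl⟩ := exists_mk_eq x
  let l := (nonempty_lift (g ∘ Subtype.val : S → _)).some
  let m := (nonempty_lift (h ∘ Subtype.val : l.support → _)).some
  rw [bind_mk t g l, bind_mk _ h m, bind_bind,
    bind_mk t _ ⟨m.support, fun s => T.bind m.val (l.val s), fun s => ?_⟩]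
  rw [← bind_mk _ h m, l.mk_val]
  rfl

noncomputable instance : Monad T.Ext where
  pure := pure T
  bind := bind

instance : LawfulMonad T.Ext :=
  LawfulMonad.mk' _ bind_pure pure_bind bind_assoc

theorem map_mk (f : X → Y) {V : Set Y} [Countable V] (φ : S → V)
    (hφ : ∀ s, (φ s : Y) = f s) (t : T.Obj S) : f <$> mk S t = mk V (T.fmap φ t) := by
  refine (bind_mk t _ ⟨V, T.unit ∘ φ, fun s => ?_⟩).trans
    (congrArg (mk V) (bind_unit_comp φ t))
  exact (pure_eq_mk (φ s)).symm.trans (congrArg (pure T) (hφ s))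

def ofObj (t : T.Obj α) : T.Ext α := mk Set.univ (T.fmap (fun a => ⟨a, trivial⟩) t)

theorem ofObj_fmap_val {S : Set α} (t : T.Obj S) : ofObj (T.fmap Subtype.val t) = mk S t := by
  rw [ofObj, fmap_fmap]
  exact mk_fmap_inclusion (Set.subset_univ S) t

theorem ofObj_injective : Function.Injective (ofObj : T.Obj α → T.Ext α) := by
  intro t t' e
  obtain ⟨V, _, h, h', e'⟩ := exists_of_mk_eq e
  have key : ∀ u : T.Obj α, T.fmap Subtype.val
      (T.fmap (Set.inclusion h) (T.fmap (fun a => ⟨a, trivial⟩) u)) = u := fun u => by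
    rw [fmap_fmap, fmap_fmap]
    exact fmap_id u
  calc t = _ := (key t).symm
    _ = _ := congrArg _ e'
    _ = t' := key t'

theorem ofObj_surjective : Function.Surjective (ofObj : T.Obj α → T.Ext α) := fun x => by
  obtain ⟨S, _, t, rfl⟩ := exists_mk_eq x
  exact ⟨_, ofObj_fmap_val t⟩

theorem ofObj_fmap (f : α → β) (t : T.Obj α) : ofObj (T.fmap f t) = f <$> ofObj t := by
  rw [ofObj, ofObj, map_mk f (V := Set.univ) (fun a => ⟨f a, trivial⟩) (fun _ => rfl),
    fmap_fmap, fmap_fmap]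
  rfl

theorem ofObj_unit (a : α) : ofObj (T.unit a) = (Pure.pure a : T.Ext α) := by
  rw [ofObj, fmap_unit]
  exact (pure_eq_mk _).symm

theorem ofObj_join (t : T.Obj (T.Obj α)) : ofObj (T.join t) = ofObj t >>= ofObj := by
  rw [ofObj, fmap_join]
  let l : Lift (ofObj ∘ Subtype.val : ↥(Set.univ : Set (T.Obj α)) → T.Ext α) :=
    ⟨Set.univ, fun a => T.fmap (fun b => (⟨b, trivial⟩ : ↥(Set.univ : Set α))) a.1,
      fun _ => rfl⟩
  exact ((bind_mk _ ofObj l).trans (congrArg (mk Set.univ)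
    (bind_fmap (fun b => (⟨b, trivial⟩ : ↥(Set.univ : Set (T.Obj α)))) l.val t))).symm

end Ext

noncomputable def extend (T : CntMonad) : SetMonad := SetMonad.ofLawfulMonad T.Ext

theorem extend_extends : SetMonadExtends T T.extend :=
  ⟨fun _ => Ext.ofObj, fun _ => ⟨Ext.ofObj_injective, Ext.ofObj_surjective⟩,
    fun _ _ => Ext.ofObj_fmap, fun _ => Ext.ofObj_unit,
    fun _ t => (Ext.ofObj_join t).trans (bind_map_left Ext.ofObj (Ext.ofObj t) id).symm⟩

end CntMonad

theorem SetFunctor.map_map (B : SetFunctor) {X Y Z : Type} (f : X → Y) (g : Y → Z)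
    (x : B.obj X) : B.map g (B.map f x) = B.map (g ∘ f) x :=
  (congrFun (B.map_comp f g) x).symm

theorem SetFunctor.map_injective_of_leftInverse (B : SetFunctor) {X Y : Type} {f : X → Y}
    {r : Y → X} (h : Function.LeftInverse r f) : Function.Injective (B.map f) := fun x y e => by
  simpa only [B.map_map, h.comp_eq_id, B.map_id, id] using congrArg (B.map r) e

theorem SetFunctor.CountablyAccessible.exists_countable_support {B : SetFunctor}
    (hacc : B.CountablyAccessible) {X : Type} (x : B.obj X) :
    ∃ N : Set X, N.Countable ∧ ∃ y : B.obj N, B.map Subtype.val y = x := by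
  obtain ⟨Y, _, i, -, y, rfl⟩ := hacc X x
  exact ⟨Set.range i, Set.countable_range i, B.map (Set.rangeFactorization i) y,
    B.map_map _ _ _⟩

namespace IsCoalgHom

variable {B : SetFunctor} {X Y Z : Type} {f : X → B.obj X} {g : Y → B.obj Y} {e : Z → B.obj Z}

theorem of_comp_of_injective {p : Y → Z} {q : X → Y} {r : X → Z} (hp : IsCoalgHom B g e p)
    (hinj : Function.Injective p) (hr : IsCoalgHom B f e r) (hpq : ∀ x, p (q x) = r x) :
    IsCoalgHom B f g q := by
  intro x
  have : Nonempty Y := ⟨q x⟩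
  obtain ⟨s, hs⟩ := hinj.hasLeftInverse
  apply B.map_injective_of_leftInverse hs
  rw [B.map_map, show p ∘ q = r from funext hpq, hr, hp, hpq]

theorem of_cover {φ : Y → Z}
    (h : ∀ y, ∃ (A : Type) (a : A → B.obj A) (p : A → Y) (ψ : A → Z),
      IsCoalgHom B a g p ∧ IsCoalgHom B a e ψ ∧ (∀ z, φ (p z) = ψ z) ∧
        y ∈ Set.range p) :
    IsCoalgHom B g e φ := by
  intro y
  obtain ⟨A, a, p, ψ, hp, hψ, hφ, z, rfl⟩ := h y
  rw [← hp z, B.map_map, show φ ∘ p = ψ from funext hφ, hψ z, hφ z]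

end IsCoalgHom

structure BCoalg.CountableSub {B : SetFunctor} (C : BCoalg B) where
  carrier : Set C.carrier
  [countable : Countable carrier]
  str : carrier → B.obj carrier
  isCoalgHom_val : IsCoalgHom B str C.str Subtype.val

attribute [instance] BCoalg.CountableSub.countable

instance CBCoalg.instCountableCarrier {B : SetFunctor} (c : CBCoalg B) : Countable c.carrier :=
  c.cnt

namespace BCoalg

variable {B : SetFunctor} {C : BCoalg B}

abbrev CountableSub.toCBCoalg (W : C.CountableSub) : CBCoalg B :=
  ⟨W.carrier, W.countable, W.str⟩

theorem CountableSub.isCoalgHom_inclusion {W W' : C.CountableSub} (h : W.carrier ⊆ W'.carrier) :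
    IsCoalgHom B W.str W'.str (Set.inclusion h) :=
  W'.isCoalgHom_val.of_comp_of_injective Subtype.val_injective W.isCoalgHom_val fun _ => rfl

theorem exists_countableSub_superset (hacc : B.CountablyAccessible) (C : BCoalg B)
    {S : Set C.carrier} (hS : S.Countable) : ∃ W : C.CountableSub, S ⊆ W.carrier := by
  choose N hN b hb using fun x => hacc.exists_countable_support (C.str x)
  obtain ⟨W, hSW, hW, hNW⟩ := exists_countable_superset_closed N hN hS
  have := hW.to_subtype
  refine ⟨⟨W, fun w => B.map (Set.inclusion (hNW w w.2)) (b w), fun w => ?_⟩, hSW⟩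
  rw [B.map_map]
  exact hb w

end BCoalg

def CBCoalg.univ {B : SetFunctor} (c : CBCoalg B) : c.toBCoalg.CountableSub where
  carrier := Set.univ
  countable := @Subtype.countable _ c.cnt _
  str x := B.map (fun y => (⟨y, trivial⟩ : ↥(Set.univ : Set c.carrier))) (c.str x.1)
  isCoalgHom_val x := (B.map_map _ _ _).trans (congrFun B.map_id (c.str x.1))

namespace BCoalgMonad

variable {B : SetFunctor} (T : SetMonad)
  (str : ∀ C : BCoalg B, T.obj C.carrier → B.obj (T.obj C.carrier))
  (map_hom : ∀ {C D : BCoalg B} {h : C.carrier → D.carrier},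
    IsCoalgHom B C.str D.str h → IsCoalgHom B (str C) (str D) (T.map h))
  (η_hom : ∀ C : BCoalg B, IsCoalgHom B C.str (str C) T.η)
  (μ_hom : ∀ C : BCoalg B, IsCoalgHom B (str ⟨T.obj C.carrier, str C⟩) (str C) T.μ)

def ofLift : BCoalgMonad B where
  obj C := ⟨T.obj C.carrier, str C⟩
  map h _ := T.map h
  map_hom _ hh := map_hom hh
  map_id := T.map_id
  map_comp h₁ _ h₂ _ := T.map_comp h₁ h₂
  η _ := T.η
  η_hom := η_hom
  μ _ := T.μ
  μ_hom := μ_hom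
  η_nat h _ := T.η_nat h
  μ_nat h _ := T.μ_nat h
  left_unit _ := T.left_unit
  right_unit _ := T.right_unit
  assoc _ := T.assoc

theorem isLiftingUpToIso_ofLift : IsLiftingUpToIso B T (ofLift T str map_hom η_hom μ_hom) :=
  ⟨fun _ => id, fun _ => Function.bijective_id, fun _ _ _ _ _ => rfl, fun _ _ => rfl,
    fun _ t => (congrArg T.μ (congrFun T.map_id t)).symm⟩

end BCoalgMonad

namespace CntMonad.Ext

variable {B : SetFunctor} {T : CntMonad} {C : BCoalg B}

theorem exists_countableSub_mk_eq (hacc : B.CountablyAccessible) (x : T.Ext C.carrier) :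
    ∃ (W : C.CountableSub) (t : T.Obj W.carrier), mk W.carrier t = x := by
  obtain ⟨S, _, t, rfl⟩ := exists_mk_eq x
  obtain ⟨W, hSW⟩ := C.exists_countableSub_superset hacc (Set.to_countable S)
  exact ⟨W, T.fmap (Set.inclusion hSW) t, mk_fmap_inclusion hSW t⟩

end CntMonad.Ext

namespace CntMonadLifting

open CntMonad

variable {B : SetFunctor} {T : CntMonad} (L : CntMonadLifting B T) {C D : BCoalg B}

theorem isCoalgHom_fmap {c d : CBCoalg B} {h : c.carrier → d.carrier}
    (hh : IsCoalgHom B c.str d.str h) : IsCoalgHom B (L.lift c) (L.lift d) (T.fmap h) :=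
  L.map_hom c d h hh

theorem map_mk_lift_fmap_inclusion {W W' : C.CountableSub} (h : W.carrier ⊆ W'.carrier)
    (t : T.Obj W.carrier) :
    B.map (Ext.mk W'.carrier) (L.lift W'.toCBCoalg (T.fmap (Set.inclusion h) t))
      = B.map (Ext.mk W.carrier) (L.lift W.toCBCoalg t) := by
  have hom := L.isCoalgHom_fmap (c := W.toCBCoalg) (d := W'.toCBCoalg)
    (BCoalg.CountableSub.isCoalgHom_inclusion h) t
  refine (congrArg (B.map _) hom.symm).trans ((B.map_map _ _ _).trans ?_)
  exact congrArg (B.map · _) (funext (Ext.mk_fmap_inclusion h))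

theorem map_mk_lift_eq_of_mk_eq (hacc : B.CountablyAccessible) {W W' : C.CountableSub}
    {t : T.Obj W.carrier} {t' : T.Obj W'.carrier} (e : Ext.mk W.carrier t = Ext.mk W'.carrier t') :
    B.map (Ext.mk W.carrier) (L.lift W.toCBCoalg t)
      = B.map (Ext.mk W'.carrier) (L.lift W'.toCBCoalg t') := by
  obtain ⟨V, _, h, h', e⟩ := Ext.exists_of_mk_eq e
  obtain ⟨U, hVU⟩ := C.exists_countableSub_superset hacc (Set.to_countable V)
  rw [← L.map_mk_lift_fmap_inclusion (h.trans hVU),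
    ← L.map_mk_lift_fmap_inclusion (h'.trans hVU),
    ← fmap_inclusion_inclusion h hVU, e, fmap_inclusion_inclusion]

/-- On the image of `T W → T.Ext C`, for a countable subcoalgebra `W`, the structure of the
lifted coalgebra on `T W`; the choice of `W` does not matter by `map_mk_lift_eq_of_mk_eq`. -/
noncomputable def extStr (hacc : B.CountablyAccessible) (C : BCoalg B) (x : T.Ext C.carrier) :
    B.obj (T.Ext C.carrier) :=
  let W := (Ext.exists_countableSub_mk_eq hacc x).choose
  let t := (Ext.exists_countableSub_mk_eq hacc x).choose_spec.choose
  B.map (Ext.mk W.carrier) (L.lift W.toCBCoalg t)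

noncomputable def extCoalg (hacc : B.CountablyAccessible) (C : BCoalg B) : BCoalg B :=
  ⟨T.Ext C.carrier, L.extStr hacc C⟩

theorem isCoalgHom_mk (hacc : B.CountablyAccessible) (W : C.CountableSub) :
    IsCoalgHom B (L.lift W.toCBCoalg) (L.extStr hacc C) (Ext.mk W.carrier) := fun t =>
  L.map_mk_lift_eq_of_mk_eq hacc
    (Ext.exists_countableSub_mk_eq hacc (Ext.mk W.carrier t)).choose_spec.choose_spec.symm

theorem isCoalgHom_map (hacc : B.CountablyAccessible) {h : C.carrier → D.carrier}
    (hh : IsCoalgHom B C.str D.str h) :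
    IsCoalgHom B (L.extStr hacc C) (L.extStr hacc D) (h <$> ·) := by
  refine IsCoalgHom.of_cover fun x => ?_
  obtain ⟨W, t, rfl⟩ := Ext.exists_countableSub_mk_eq hacc x
  obtain ⟨W', hW'⟩ := D.exists_countableSub_superset hacc ((Set.to_countable W.carrier).image h)
  let hW : W.carrier → W'.carrier := fun w => ⟨h w, hW' ⟨w, w.2, rfl⟩⟩
  have hWhom : IsCoalgHom B W.str W'.str hW :=
    W'.isCoalgHom_val.of_comp_of_injective Subtype.val_injective
      (isCoalgHom_comp B W.isCoalgHom_val hh) fun _ => rfl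
  exact ⟨_, _, _, _, L.isCoalgHom_mk hacc W,
    isCoalgHom_comp B (L.isCoalgHom_fmap hWhom) (L.isCoalgHom_mk hacc W'),
    Ext.map_mk h hW fun _ => rfl, t, rfl⟩

theorem isCoalgHom_pure (hacc : B.CountablyAccessible) (C : BCoalg B) :
    IsCoalgHom B C.str (L.extStr hacc C) pure := by
  refine IsCoalgHom.of_cover fun x => ?_
  obtain ⟨W, hxW⟩ := C.exists_countableSub_superset hacc (Set.countable_singleton x)
  exact ⟨W.carrier, W.str, Subtype.val, _, W.isCoalgHom_val,
    isCoalgHom_comp B (L.η_hom W.toCBCoalg) (L.isCoalgHom_mk hacc W), Ext.pure_eq_mk,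
    ⟨x, hxW rfl⟩, rfl⟩

theorem exists_isCoalgHom_lift (hacc : B.CountablyAccessible)
    (W : (L.extCoalg hacc C).CountableSub) :
    ∃ (U : C.CountableSub) (τ : W.carrier → T.Obj U.carrier),
      IsCoalgHom B W.str (L.lift U.toCBCoalg) τ ∧ ∀ w, Ext.mk U.carrier (τ w) = w.1 := by
  obtain ⟨⟨S, τ₀, hτ₀⟩⟩ :=
    Ext.nonempty_lift fun w : W.carrier => (w.1 : T.Ext C.carrier)
  -- `P` makes `U` nonempty (unless `C` is empty), so that `Ext.mk U` is injective.
  obtain ⟨P, hP, hPne⟩ :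
      ∃ P : Set C.carrier, P.Countable ∧ (IsEmpty C.carrier ∨ P.Nonempty) := by
    rcases isEmpty_or_nonempty C.carrier with hC | hC
    · exact ⟨∅, Set.countable_empty, .inl hC⟩
    · exact ⟨{hC.some}, Set.countable_singleton _, .inr ⟨hC.some, rfl⟩⟩
  obtain ⟨U, hU⟩ := C.exists_countableSub_superset hacc ((Set.to_countable S).union hP)
  let τ w := T.fmap (Set.inclusion (Set.subset_union_left.trans hU)) (τ₀ w)
  have hτ : ∀ w, Ext.mk U.carrier (τ w) = w.1 := fun w =>
    (Ext.mk_fmap_inclusion _ _).trans (hτ₀ w)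
  have hinj : Function.Injective (Ext.mk U.carrier : T.Obj U.carrier → T.Ext C.carrier) :=
    Ext.mk_injective (hPne.imp_right fun hP' => hP'.mono (Set.subset_union_right.trans hU))
  exact ⟨U, τ, (L.isCoalgHom_mk hacc U).of_comp_of_injective hinj W.isCoalgHom_val hτ, hτ⟩

theorem isCoalgHom_join (hacc : B.CountablyAccessible) (C : BCoalg B) :
    IsCoalgHom B (L.extStr hacc (L.extCoalg hacc C)) (L.extStr hacc C) (· >>= id) := by
  refine IsCoalgHom.of_cover fun x => ?_
  obtain ⟨W, t, rfl⟩ := Ext.exists_countableSub_mk_eq hacc x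
  obtain ⟨U, τ, hτ, hτU⟩ := L.exists_isCoalgHom_lift hacc W
  exact ⟨_, _, _, Ext.mk U.carrier ∘ T.join ∘ T.fmap τ, L.isCoalgHom_mk hacc W,
    isCoalgHom_comp B
      (isCoalgHom_comp B
        (L.isCoalgHom_fmap (c := W.toCBCoalg) (d := ⟨_, _, L.lift U.toCBCoalg⟩) hτ)
        (L.μ_hom U.toCBCoalg))
      (L.isCoalgHom_mk hacc U),
    fun t => Ext.bind_mk t id ⟨U.carrier, τ, hτU⟩, t, rfl⟩

theorem isCoalgHom_ofObj (hacc : B.CountablyAccessible) (c : CBCoalg B) :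
    IsCoalgHom B (L.lift c) (L.extStr hacc c.toBCoalg) Ext.ofObj :=
  isCoalgHom_comp B (L.isCoalgHom_fmap (d := c.univ.toCBCoalg) (fun _ => rfl))
    (L.isCoalgHom_mk hacc c.univ)

noncomputable def extend (hacc : B.CountablyAccessible) : BCoalgMonad B :=
  BCoalgMonad.ofLift T.extend (L.extStr hacc) (L.isCoalgHom_map hacc) (L.isCoalgHom_pure hacc)
    (L.isCoalgHom_join hacc)

theorem extend_extends (hacc : B.CountablyAccessible) : BCoalgMonadExtends B T L (L.extend hacc) :=
  ⟨fun _ => Ext.ofObj, L.isCoalgHom_ofObj hacc,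
    fun _ => ⟨Ext.ofObj_injective, Ext.ofObj_surjective⟩, fun _ _ _ _ => Ext.ofObj_fmap _,
    fun _ => Ext.ofObj_unit, fun _ t => (Ext.ofObj_join t).trans (bind_map_left _ _ id).symm⟩

end CntMonadLifting

theorem statement14 (B : SetFunctor) (hacc : B.CountablyAccessible)
    (Tc : CntMonad) (L : CntMonadLifting B Tc) :
    ∃ T : SetMonad, SetMonadExtends Tc T ∧
      ∃ Tb : BCoalgMonad B, BCoalgMonadExtends B Tc L Tb ∧ IsLiftingUpToIso B T Tb :=
  ⟨Tc.extend, Tc.extend_extends, L.extend hacc, L.extend_extends hacc,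
    BCoalgMonad.isLiftingUpToIso_ofLift _ _ _ _ _⟩
end
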